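/- arXiv:2006.16726 — 9 statements merged into one kernel-verified Lean document; each statement's English description precedes it below -/
import Mathlib

section
/- Let G be a finite simple graph and let k = Γ(G) + α(G) − 1. Let D be an inclusion-wise minimal dominating set of G and let S be an inclusion-wise maximal independent set of G such that D ∩ S ≠ ∅. Then there exists a TAR(k) reconfiguration sequence between D and S of length at most |D| + α(G) − 2. -/
open Finset SimpleGraph

variable {V : Type*}

/-- `D` is a dominating set of `G`: every vertex is in `D` or has a neighbor in `D`. -/
def IsDomSet (G : SimpleGraph V) (D : Finset V) : Prop :=
  ∀ v : V, v ∈ D ∨ ∃ u ∈ D, G.Adj u v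

/-- `S` is an independent set of `G`: pairwise non-adjacent vertices. -/
def IsIndep (G : SimpleGraph V) (S : Finset V) : Prop :=
  ∀ u ∈ S, ∀ v ∈ S, u ≠ v → ¬ G.Adj u v

/-- `Γ(G)`: the maximum size of an inclusion-wise minimal dominating set of `G`. -/
noncomputable def gammaU (G : SimpleGraph V) : ℕ :=
  sSup {n | ∃ D : Finset V, Minimal (IsDomSet G) D ∧ D.card = n}

/-- `α(G)`: the maximum size of an independent set of `G`. -/
noncomputable def alphaU (G : SimpleGraph V) : ℕ :=
  sSup {n | ∃ S : Finset V, IsIndep G S ∧ S.card = n}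

/-- The `k`-reconfiguration graph `R_k(G)`: vertices are dominating sets of size at most `k`,
two dominating sets being adjacent iff their symmetric difference has exactly one element. -/
def reconfGraph [DecidableEq V] (G : SimpleGraph V) (k : ℕ) :
    SimpleGraph {D : Finset V // IsDomSet G D ∧ D.card ≤ k} where
  Adj A B := (symmDiff A.val B.val).card = 1
  symm := ⟨fun A B h => by simpa [symmDiff_comm] using h⟩
  loopless := ⟨fun A h => by simp [symmDiff_self, Finset.bot_eq_empty] at h⟩

/-- A TAR(k) reconfiguration sequence of length `ℓ` from `Ds` to `Dt`, encoded by
`f : ℕ → Finset V` on indices `0, …, ℓ`. -/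
def IsTARSeq [DecidableEq V] (G : SimpleGraph V) (k : ℕ) (Ds Dt : Finset V)
    (ℓ : ℕ) (f : ℕ → Finset V) : Prop :=
  f 0 = Ds ∧ f ℓ = Dt ∧
  (∀ i ≤ ℓ, IsDomSet G (f i) ∧ (f i).card ≤ k) ∧
  (∀ i < ℓ, (symmDiff (f i) (f (i + 1))).card = 1)

/-- `H` is a minor of `G` (branch-set / model definition). -/
def IsMinor {W : Type*} (H : SimpleGraph W) (G : SimpleGraph V) : Prop :=
  ∃ f : W → Set V,
    (∀ w, (f w).Nonempty) ∧
    (∀ w, (G.induce (f w)).Connected) ∧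
    (∀ w₁ w₂, w₁ ≠ w₂ → Disjoint (f w₁) (f w₂)) ∧
    (∀ w₁ w₂, H.Adj w₁ w₂ → ∃ u ∈ f w₁, ∃ v ∈ f w₂, G.Adj u v)

/-- `G` is `d`-minor sparse: every (nonempty) bipartite minor `H` of `G` has
average degree less than `d`, i.e. `2|E(H)| < d·|V(H)|`. -/
def MinorSparse (G : SimpleGraph V) (d : ℕ) : Prop :=
  ∀ m : ℕ, 0 < m → ∀ H : SimpleGraph (Fin m),
    IsMinor H G → H.Colorable 2 → 2 * H.edgeSet.ncard < d * m

/-- `G` has a tree decomposition of width at most `w`. -/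
def HasTreeDecompOfWidth (G : SimpleGraph V) (w : ℕ) : Prop :=
  ∃ (m : ℕ) (T : SimpleGraph (Fin m)) (bags : Fin m → Finset V),
    T.IsTree ∧
    (∀ v : V, ∃ i, v ∈ bags i) ∧
    (∀ u v : V, G.Adj u v → ∃ i, u ∈ bags i ∧ v ∈ bags i) ∧
    (∀ v : V, (T.induce {i | v ∈ bags i}).Connected) ∧
    (∀ i, (bags i).card ≤ w + 1)

/-- The treewidth of `G`. -/
noncomputable def treewidth (G : SimpleGraph V) : ℕ :=
  sInf {w | HasTreeDecompOfWidth G w}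

/-- `G` has a path decomposition of width at most `w`. -/
def HasPathDecompOfWidth (G : SimpleGraph V) (w : ℕ) : Prop :=
  ∃ (m : ℕ) (bags : Fin m → Finset V),
    (∀ v : V, ∃ i, v ∈ bags i) ∧
    (∀ u v : V, G.Adj u v → ∃ i, u ∈ bags i ∧ v ∈ bags i) ∧
    (∀ v : V, ∀ i j k : Fin m, i ≤ j → j ≤ k → v ∈ bags i → v ∈ bags k → v ∈ bags j) ∧
    (∀ i, (bags i).card ≤ w + 1)

/-- The pathwidth of `G`. -/
noncomputable def pathwidth (G : SimpleGraph V) : ℕ :=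
  sInf {w | HasPathDecompOfWidth G w}

/-- In a tree `T` rooted at `r`, node `i` is a descendant of node `j`
(i.e. `j` lies on the unique path from `r` to `i`): every walk from `r` to `i` meets `j`. -/
def IsDesc {ι : Type*} (T : SimpleGraph ι) (r j i : ι) : Prop :=
  ∀ p : T.Walk r i, j ∈ p.support

/-- The graph `G_{ℓ,ℓ-1}` of Mynhardt et al.: vertex `none` is `u₀`, and `some (i,j)` is the
`j`-th vertex of the clique `Cᵢ` (`C₀` being the outer clique, `C₁,…,C_{ℓ-1}` the inner ones). -/
def Gll (ℓ : ℕ) : SimpleGraph (Option (Fin ℓ × Fin ℓ)) :=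
  SimpleGraph.fromRel (fun x y =>
    match x, y with
    | none, some p => p.1.val = 0
    | some p, some q => (p.1 = q.1 ∧ p.2 ≠ q.2) ∨ (p.2 = q.2 ∧ q.1.val = 0)
    | _, _ => False)

/-- The star `K_{1,n}`: the center is `none`, the leaves are `some i`. -/
def starGraph (n : ℕ) : SimpleGraph (Option (Fin n)) :=
  SimpleGraph.fromRel (fun x _ => x = none)

/-- The 9-vertex planar graph of Suzuki et al.: `(0,i) = aᵢ`, `(1,i) = bᵢ`, `(2,i) = cᵢ`;
edges are the three triangles `a₁a₂a₃`, `b₁b₂b₃`, `c₁c₂c₃` and the edges `aᵢbᵢ`, `bᵢcᵢ`. -/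
def suzukiGraph : SimpleGraph (Fin 3 × Fin 3) :=
  SimpleGraph.fromRel (fun x y =>
    (x.1 = y.1 ∧ x.2 ≠ y.2) ∨
    (x.2 = y.2 ∧ ((x.1 = 0 ∧ y.1 = 1) ∨ (x.1 = 1 ∧ y.1 = 2))))
lemma tar_add {V : Type} [DecidableEq V] :
    ∀ (n : ℕ) (A B : Finset V), A ⊆ B → (B \ A).card = n →
    ∃ f : ℕ → Finset V, f 0 = A ∧ f n = B ∧
      (∀ i ≤ n, A ⊆ f i ∧ f i ⊆ B) ∧
      (∀ i < n, (symmDiff (f i) (f (i + 1))).card = 1) := by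
  intro n
  induction n with
  | zero =>
    intro A B hAB hc
    have hBA : B = A := by
      apply Finset.Subset.antisymm _ hAB
      intro x hx
      by_contra hxA
      have : x ∈ B \ A := Finset.mem_sdiff.2 ⟨hx, hxA⟩
      simpa [Finset.card_eq_zero.1 hc] using this
    exact ⟨fun _ => A, rfl, hBA.symm, fun i _ => ⟨le_rfl, hAB⟩, fun i h => by omega⟩
  | succ n ih =>
    intro A B hAB hc
    obtain ⟨x, hx⟩ : (B \ A).Nonempty := Finset.card_pos.1 (by omega)
    have hxB : x ∈ B := (Finset.mem_sdiff.1 hx).1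
    have hxA : x ∉ A := (Finset.mem_sdiff.1 hx).2
    have hA'B : insert x A ⊆ B := Finset.insert_subset hxB hAB
    have hcard : (B \ insert x A).card = n := by
      have he : B \ insert x A = (B \ A).erase x := by
        ext y; simp [Finset.mem_sdiff, Finset.mem_erase, Finset.mem_insert]; tauto
      rw [he, Finset.card_erase_of_mem hx, hc]
      omega
    obtain ⟨f', h0, he, hsub, hstep⟩ := ih (insert x A) B hA'B hcard
    refine ⟨fun i => match i with | 0 => A | j + 1 => f' j, rfl, he, ?_, ?_⟩
    · intro i hi
      match i with
      | 0 => exact ⟨le_rfl, hAB⟩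
      | j + 1 =>
        have := hsub j (by omega)
        exact ⟨(Finset.subset_insert x A).trans this.1, this.2⟩
    · intro i hi
      match i with
      | 0 =>
        show (symmDiff A (f' 0)).card = 1
        rw [h0]
        have : symmDiff A (insert x A) = {x} := by
          rw [symmDiff_def, Finset.sup_eq_union,
            Finset.sdiff_eq_empty_iff_subset.2 (Finset.subset_insert x A),
            Finset.insert_sdiff_cancel hxA, Finset.empty_union]
        rw [this, Finset.card_singleton]
      | j + 1 =>
        exact hstep j (by omega)

lemma maximal_indep_dom {V : Type} [DecidableEq V] (G : SimpleGraph V) (S : Finset V)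
    (hS : Maximal (IsIndep G) S) : IsDomSet G S := by
  intro v
  by_cases hv : v ∈ S
  · exact Or.inl hv
  · right
    by_contra hno
    push_neg at hno
    have hindep : IsIndep G (insert v S) := by
      intro u hu w hw hne
      rcases Finset.mem_insert.1 hu with rfl | hu'
      · rcases Finset.mem_insert.1 hw with rfl | hw'
        · exact absurd rfl hne
        · intro hadj; exact hno w hw' hadj.symm
      · rcases Finset.mem_insert.1 hw with rfl | hw'
        · exact hno u hu'
        · exact hS.prop u hu' w hw' hne
    have : insert v S ⊆ S := hS.2 hindep (Finset.subset_insert v S)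
    exact hv (this (Finset.mem_insert_self v S))

lemma dom_of_superset {V : Type} (G : SimpleGraph V) {A B : Finset V}
    (hAB : A ⊆ B) (hA : IsDomSet G A) : IsDomSet G B := by
  intro v
  rcases hA v with h | ⟨u, hu, hadj⟩
  · exact Or.inl (hAB h)
  · exact Or.inr ⟨u, hAB hu, hadj⟩

/-- If `k = Γ(G) + α(G) − 1`, `D` is a minimal dominating set, `S` a maximal independent set,
and `D ∩ S ≠ ∅`, then there is a TAR(k) sequence between `D` and `S` of length at most
`|D| + α(G) − 2`. -/
theorem stmt1 {V : Type} [Fintype V] [DecidableEq V] (G : SimpleGraph V) (k : ℕ)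
    (hk : k = gammaU G + alphaU G - 1)
    (D S : Finset V) (hD : Minimal (IsDomSet G) D) (hS : Maximal (IsIndep G) S)
    (hDS : (D ∩ S).Nonempty) :
    ∃ ℓ ≤ D.card + alphaU G - 2, ∃ f : ℕ → Finset V, IsTARSeq G k D S ℓ f := by
  classical
  obtain ⟨x0, hx0⟩ := hDS
  have hx0D : x0 ∈ D := (Finset.mem_inter.1 hx0).1
  have hx0S : x0 ∈ S := (Finset.mem_inter.1 hx0).2
  set U : Finset V := D ∪ S with hU
  have hDU : D ⊆ U := Finset.subset_union_left
  have hSU : S ⊆ U := Finset.subset_union_right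
  -- bounds on Γ and α
  have hDG : D.card ≤ gammaU G := by
    apply le_csSup
    · exact ⟨Fintype.card V, by rintro n ⟨D', _, rfl⟩; exact Finset.card_le_univ D'⟩
    · exact ⟨D, hD, rfl⟩
  have hSA : S.card ≤ alphaU G := by
    apply le_csSup
    · exact ⟨Fintype.card V, by rintro n ⟨S', _, rfl⟩; exact Finset.card_le_univ S'⟩
    · exact ⟨S, hS.prop, rfl⟩
  have hSdom : IsDomSet G S := maximal_indep_dom G S hS
  -- size of U
  have hcapS : 1 ≤ (D ∩ S).card := Finset.card_pos.2 ⟨x0, hx0⟩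
  have hUcard : U.card + (D ∩ S).card = D.card + S.card :=
    Finset.card_union_add_card_inter D S
  have hUk : U.card ≤ k := by rw [hk]; omega
  set p := (U \ D).card with hp
  set q := (U \ S).card with hq
  obtain ⟨f1, hf10, hf1e, hf1sub, hf1step⟩ := tar_add p D U hDU rfl
  obtain ⟨f2, hf20, hf2e, hf2sub, hf2step⟩ := tar_add q S U hSU rfl
  -- length bounds
  have hpS : p < S.card := by
    apply Finset.card_lt_card
    constructor
    · intro y hy
      have := Finset.mem_sdiff.1 hy
      rcases Finset.mem_union.1 this.1 with h | h
      · exact absurd h this.2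
      · exact h
    · intro hcon
      have : x0 ∈ U \ D := hcon hx0S
      exact (Finset.mem_sdiff.1 this).2 hx0D
  have hqD : q < D.card := by
    apply Finset.card_lt_card
    constructor
    · intro y hy
      have := Finset.mem_sdiff.1 hy
      rcases Finset.mem_union.1 this.1 with h | h
      · exact h
      · exact absurd h this.2
    · intro hcon
      have : x0 ∈ U \ S := hcon hx0D
      exact (Finset.mem_sdiff.1 this).2 hx0S
  refine ⟨p + q, by omega, fun i => if i < p then f1 i else f2 (q - (i - p)), ?_, ?_, ?_, ?_⟩
  · rcases Nat.eq_zero_or_pos p with h | h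
    · have : U = D := by
        apply Finset.Subset.antisymm _ hDU
        intro y hy
        by_contra hyD
        have : y ∈ U \ D := Finset.mem_sdiff.2 ⟨hy, hyD⟩
        have : (U \ D).Nonempty := ⟨y, this⟩
        rw [← Finset.card_pos] at this
        omega
      simp only [h, Nat.not_lt_zero, if_false, Nat.sub_zero, Nat.zero_sub, hf2e]
      exact this
    · simpa [h, hf10] using hf10
  · have : ¬ (p + q < p) := by omega
    simp only [this, if_false]
    have : q - (p + q - p) = 0 := by omega
    rw [this, hf20]
  · intro i hi
    by_cases h : i < p
    · have hs := hf1sub i (le_of_lt h)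
      simp only [if_pos h]
      exact ⟨dom_of_superset G hs.1 hD.prop, le_trans (Finset.card_le_card hs.2) hUk⟩
    · have hiq : q - (i - p) ≤ q := Nat.sub_le _ _
      have hs := hf2sub (q - (i - p)) hiq
      simp only [if_neg h]
      exact ⟨dom_of_superset G hs.1 hSdom, le_trans (Finset.card_le_card hs.2) hUk⟩
  · intro i hi
    by_cases h : i + 1 < p
    · have h' : i < p := by omega
      simp only [if_pos h, if_pos h']
      exact hf1step i (by omega)
    · by_cases h2 : i < p
      -- i = p - 1, the step from f1 (p-1) to f2 q = U = f1 p
      · have hip : i + 1 = p := by omega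
        simp only [if_pos h2, if_neg h]
        have : q - (i + 1 - p) = q := by omega
        rw [this, hf2e, ← hf1e, ← hip]
        exact hf1step i (by omega)
      · -- i ≥ p : steps within f2, reversed
        have hipq : i - p < q := by omega
        simp only [if_neg h, if_neg h2]
        have e1 : q - (i - p) = (q - (i + 1 - p)) + 1 := by omega
        rw [e1, symmDiff_comm]
        exact hf2step (q - (i + 1 - p)) (by omega)
end

section
/- Let G be a finite simple graph and let k = Γ(G) + α(G) − 1. Let D_1 and D_2 be two inclusion-wise minimal dominating sets of G with D_1 ∩ D_2 ≠ ∅. Then there exists a TAR(k) reconfiguration sequence from D_1 to D_2 of length at most 2·(α(G) + Γ(G) − 2). -/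
open Finset SimpleGraph

variable {V : Type*}

section Helpers

variable {V : Type} [Fintype V] [DecidableEq V] {G : SimpleGraph V}

lemma domset_mono {A B : Finset V} (h : A ⊆ B) (hA : IsDomSet G A) : IsDomSet G B := by
  intro v
  rcases hA v with hv | ⟨u, hu, hadj⟩
  · exact Or.inl (h hv)
  · exact Or.inr ⟨u, h hu, hadj⟩

lemma seq_up_aux (n : ℕ) : ∀ A B : Finset V, A ⊆ B → (B \ A).card = n →
    ∃ g : ℕ → Finset V, g 0 = A ∧ g n = B ∧
      (∀ i, A ⊆ g i ∧ g i ⊆ B) ∧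
      (∀ i < n, (symmDiff (g i) (g (i + 1))).card = 1) := by
  induction n with
  | zero =>
    intro A B hAB hcard
    have : B ⊆ A := by
      rw [← Finset.sdiff_eq_empty_iff_subset]
      exact Finset.card_eq_zero.mp hcard
    have hEq : A = B := Finset.Subset.antisymm hAB this
    exact ⟨fun _ => A, rfl, hEq ▸ rfl, fun i => ⟨Finset.Subset.refl _, hEq ▸ Finset.Subset.refl _⟩,
      fun i hi => by omega⟩
  | succ n ih =>
    intro A B hAB hcard
    obtain ⟨x, hx⟩ : (B \ A).Nonempty := Finset.card_pos.mp (by omega)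
    have hxB : x ∈ B := (Finset.mem_sdiff.mp hx).1
    have hxA : x ∉ A := (Finset.mem_sdiff.mp hx).2
    have hA'B : insert x A ⊆ B := Finset.insert_subset hxB hAB
    have hcard' : (B \ insert x A).card = n := by
      have : B \ insert x A = (B \ A).erase x := by
        ext y; simp [Finset.mem_sdiff, Finset.mem_erase]; tauto
      rw [this, Finset.card_erase_of_mem hx, hcard]
      omega
    obtain ⟨g', hg0, hgn, hbet, hstep⟩ := ih (insert x A) B hA'B hcard'
    refine ⟨fun i => if i = 0 then A else g' (i - 1), rfl, by simp [hgn], ?_, ?_⟩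
    · intro i
      by_cases h : i = 0
      · simp [h, hAB]
      · simp only [h, if_false]
        exact ⟨(Finset.subset_insert x A).trans (hbet (i - 1)).1, (hbet (i - 1)).2⟩
    · intro i hi
      by_cases h : i = 0
      · subst h
        have : symmDiff A (g' 0) = {x} := by
          rw [hg0]
          rw [symmDiff_def]
          have h1 : A \ insert x A = ∅ := Finset.sdiff_eq_empty_iff_subset.mpr (Finset.subset_insert x A)
          have h2 : insert x A \ A = {x} := by
            ext y; simp [Finset.mem_sdiff]; constructor
            · rintro ⟨h3 | h3, h4⟩ <;> tauto
            · rintro rfl; exact ⟨Or.inl rfl, hxA⟩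
          simp [Finset.sup_eq_union, h1, h2]
        simp [this]
      · have h1 : i - 1 + 1 = i := by omega
        simp only [if_neg h, if_neg (by omega : ¬ i + 1 = 0)]
        have := hstep (i - 1) (by omega)
        rw [h1] at this
        have h2 : i + 1 - 1 = i - 1 + 1 := by omega
        rw [h2, h1]
        exact this

lemma tar_glue {k m n : ℕ} {A B C : Finset V} {f g : ℕ → Finset V}
    (hf : IsTARSeq G k A B m f) (hg : IsTARSeq G k B C n g) :
    IsTARSeq G k A C (m + n) (fun i => if i < m then f i else g (i - m)) := by
  obtain ⟨hf0, hfm, hfdom, hfstep⟩ := hf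
  obtain ⟨hg0, hgn, hgdom, hgstep⟩ := hg
  refine ⟨?_, ?_, ?_, ?_⟩
  · by_cases h : 0 < m
    · simp [h, hf0]
    · have : m = 0 := by omega
      simp [this, hg0, ← hfm, this, hf0]
  · simp only [if_neg (by omega : ¬ m + n < m)]
    simpa using hgn
  · intro i hi
    by_cases h : i < m
    · simp only [if_pos h]; exact hfdom i (by omega)
    · simp only [if_neg h]; exact hgdom (i - m) (by omega)
  · intro i hi
    by_cases h : i < m
    · have hfi1 : (if i + 1 < m then f (i + 1) else g (i + 1 - m)) = f (i + 1) := by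
        by_cases h2 : i + 1 < m
        · simp [h2]
        · have hm : i + 1 = m := by omega
          simp [h2, hm, hg0, hfm]
      simp only [if_pos h, hfi1]
      exact hfstep i h
    · have h1 : ¬ i + 1 < m := by omega
      simp only [if_neg h, if_neg h1]
      have h2 : i + 1 - m = (i - m) + 1 := by omega
      rw [h2]
      exact hgstep (i - m) (by omega)

lemma tar_rev {k m : ℕ} {A B : Finset V} {f : ℕ → Finset V}
    (hf : IsTARSeq G k A B m f) : IsTARSeq G k B A m (fun i => f (m - i)) := by
  obtain ⟨hf0, hfm, hfdom, hfstep⟩ := hf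
  refine ⟨by simpa using hfm, by simpa using hf0, fun i hi => hfdom (m - i) (by omega), ?_⟩
  intro i hi
  have h1 : m - i = (m - (i + 1)) + 1 := by omega
  simp only []
  rw [symmDiff_comm, h1]
  exact hfstep (m - (i + 1)) (by omega)

lemma tar_of_up {k : ℕ} {A B : Finset V} (hAB : A ⊆ B) (hA : IsDomSet G A)
    (hB : B.card ≤ k) : ∃ g : ℕ → Finset V, IsTARSeq G k A B ((B \ A).card) g := by
  obtain ⟨g, hg0, hgn, hbet, hstep⟩ := seq_up_aux (B \ A).card A B hAB rfl
  exact ⟨g, hg0, hgn, fun i hi => ⟨domset_mono (hbet i).1 hA,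
    le_trans (Finset.card_le_card (hbet i).2) hB⟩, hstep⟩

end Helpers

/-- If `k = Γ(G) + α(G) − 1` and `D₁, D₂` are minimal dominating sets with `D₁ ∩ D₂ ≠ ∅`,
then there is a TAR(k) sequence from `D₁` to `D₂` of length at most `2(α(G) + Γ(G) − 2)`. -/
theorem stmt2 {V : Type} [Fintype V] [DecidableEq V] (G : SimpleGraph V) (k : ℕ)
    (hk : k = gammaU G + alphaU G - 1)
    (D₁ D₂ : Finset V) (hD₁ : Minimal (IsDomSet G) D₁) (hD₂ : Minimal (IsDomSet G) D₂)
    (hint : (D₁ ∩ D₂).Nonempty) :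
    ∃ ℓ ≤ 2 * (alphaU G + gammaU G - 2), ∃ f : ℕ → Finset V, IsTARSeq G k D₁ D₂ ℓ f := by
  classical
  obtain ⟨w, hw⟩ := hint
  have hw1 : w ∈ D₁ := (Finset.mem_inter.mp hw).1
  have hw2 : w ∈ D₂ := (Finset.mem_inter.mp hw).2
  -- bounds from sSup
  have hbddΓ : BddAbove {n | ∃ D : Finset V, Minimal (IsDomSet G) D ∧ D.card = n} := by
    refine ⟨Fintype.card V, fun n ⟨D, _, hc⟩ => ?_⟩
    rw [← hc]; exact Finset.card_le_univ D
  have hbddα : BddAbove {n | ∃ S : Finset V, IsIndep G S ∧ S.card = n} := by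
    refine ⟨Fintype.card V, fun n ⟨S, _, hc⟩ => ?_⟩
    rw [← hc]; exact Finset.card_le_univ S
  have hΓ : ∀ D : Finset V, Minimal (IsDomSet G) D → D.card ≤ gammaU G := by
    intro D hD; exact le_csSup hbddΓ ⟨D, hD, rfl⟩
  have hα : ∀ S : Finset V, IsIndep G S → S.card ≤ alphaU G := by
    intro S hS; exact le_csSup hbddα ⟨S, hS, rfl⟩
  -- a maximum independent set containing w
  have hsne : ((Finset.univ : Finset (Finset V)).filter
      (fun S => IsIndep G S ∧ w ∈ S)).Nonempty := by
    refine ⟨{w}, Finset.mem_filter.mpr ⟨Finset.mem_univ _, ?_, Finset.mem_singleton_self w⟩⟩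
    intro u hu v hv huv
    simp only [Finset.mem_singleton] at hu hv
    exact absurd (hu.trans hv.symm) huv
  obtain ⟨I, hImem, hImax⟩ := Finset.exists_max_image _ Finset.card hsne
  obtain ⟨-, hIind, hwI⟩ := Finset.mem_filter.mp hImem
  have hIdom : IsDomSet G I := by
    intro v
    by_cases hv : v ∈ I
    · exact Or.inl hv
    by_contra hcon
    push_neg at hcon
    obtain ⟨-, hnadj⟩ := hcon
    have hind : IsIndep G (insert v I) := by
      intro a ha b hb hab hadj
      rcases Finset.mem_insert.mp ha with ha' | ha' <;>
        rcases Finset.mem_insert.mp hb with hb' | hb'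
      · exact hab (ha'.trans hb'.symm)
      · exact hnadj b hb' (ha' ▸ hadj).symm
      · exact hnadj a ha' (hb' ▸ hadj)
      · exact hIind a ha' b hb' hab hadj
    have := hImax (insert v I) (Finset.mem_filter.mpr
      ⟨Finset.mem_univ _, hind, Finset.mem_insert_of_mem hwI⟩)
    rw [Finset.card_insert_of_notMem hv] at this
    omega
  -- cardinality facts
  have hIα : I.card ≤ alphaU G := hα I hIind
  have hD₁Γ : D₁.card ≤ gammaU G := hΓ D₁ hD₁
  have hD₂Γ : D₂.card ≤ gammaU G := hΓ D₂ hD₂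
  have hα1 : 1 ≤ I.card := Finset.card_pos.mpr ⟨w, hwI⟩
  have hcard1 : (D₁ ∪ I).card ≤ k := by
    have h1 := Finset.card_union_add_card_inter D₁ I
    have h2 : 1 ≤ (D₁ ∩ I).card := Finset.card_pos.mpr ⟨w, Finset.mem_inter.mpr ⟨hw1, hwI⟩⟩
    omega
  have hcard2 : (I ∪ D₂).card ≤ k := by
    have h1 := Finset.card_union_add_card_inter I D₂
    have h2 : 1 ≤ (I ∩ D₂).card := Finset.card_pos.mpr ⟨w, Finset.mem_inter.mpr ⟨hwI, hw2⟩⟩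
    omega
  -- four TAR segments
  obtain ⟨f₁, hf₁⟩ := tar_of_up (k := k) Finset.subset_union_left hD₁.1 hcard1
  obtain ⟨f₂', hf₂'⟩ := tar_of_up (k := k) (Finset.subset_union_right : I ⊆ D₁ ∪ I) hIdom hcard1
  have hf₂ := tar_rev hf₂'
  obtain ⟨f₃, hf₃⟩ := tar_of_up (k := k) Finset.subset_union_left hIdom hcard2
  obtain ⟨f₄', hf₄'⟩ := tar_of_up (k := k) (Finset.subset_union_right : D₂ ⊆ I ∪ D₂) hD₂.1 hcard2
  have hf₄ := tar_rev hf₄'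
  -- glue
  have h12 := tar_glue hf₁ hf₂
  have h123 := tar_glue h12 hf₃
  have h1234 := tar_glue h123 hf₄
  -- length bound
  have e1 : (D₁ ∪ I) \ D₁ = I \ D₁ := by
    ext y; simp [Finset.mem_sdiff]; tauto
  have e2 : (D₁ ∪ I) \ I = D₁ \ I := by
    ext y; simp [Finset.mem_sdiff]; tauto
  have e3 : (I ∪ D₂) \ I = D₂ \ I := by
    ext y; simp [Finset.mem_sdiff]; tauto
  have e4 : (I ∪ D₂) \ D₂ = I \ D₂ := by
    ext y; simp [Finset.mem_sdiff]; tauto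
  have b1 : (I \ D₁).card ≤ I.card - 1 := by
    have : I \ D₁ ⊆ I.erase w := by
      intro y hy
      rw [Finset.mem_erase]
      rcases Finset.mem_sdiff.mp hy with ⟨hyI, hyD⟩
      exact ⟨fun h => hyD (h ▸ hw1), hyI⟩
    calc (I \ D₁).card ≤ (I.erase w).card := Finset.card_le_card this
      _ = I.card - 1 := Finset.card_erase_of_mem hwI
  have b2 : (D₁ \ I).card ≤ D₁.card - 1 := by
    have : D₁ \ I ⊆ D₁.erase w := by
      intro y hy
      rw [Finset.mem_erase]
      rcases Finset.mem_sdiff.mp hy with ⟨hyD, hyI⟩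
      exact ⟨fun h => hyI (h ▸ hwI), hyD⟩
    calc (D₁ \ I).card ≤ (D₁.erase w).card := Finset.card_le_card this
      _ = D₁.card - 1 := Finset.card_erase_of_mem hw1
  have b3 : (D₂ \ I).card ≤ D₂.card - 1 := by
    have : D₂ \ I ⊆ D₂.erase w := by
      intro y hy
      rw [Finset.mem_erase]
      rcases Finset.mem_sdiff.mp hy with ⟨hyD, hyI⟩
      exact ⟨fun h => hyI (h ▸ hwI), hyD⟩
    calc (D₂ \ I).card ≤ (D₂.erase w).card := Finset.card_le_card this
      _ = D₂.card - 1 := Finset.card_erase_of_mem hw2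
  have b4 : (I \ D₂).card ≤ I.card - 1 := by
    have : I \ D₂ ⊆ I.erase w := by
      intro y hy
      rw [Finset.mem_erase]
      rcases Finset.mem_sdiff.mp hy with ⟨hyI, hyD⟩
      exact ⟨fun h => hyD (h ▸ hw2), hyI⟩
    calc (I \ D₂).card ≤ (I.erase w).card := Finset.card_le_card this
      _ = I.card - 1 := Finset.card_erase_of_mem hwI
  have hΓ1 : 1 ≤ D₁.card := Finset.card_pos.mpr ⟨w, hw1⟩
  refine ⟨_, ?_, _, h1234⟩
  rw [e1, e2, e3, e4]
  omega
end

section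
/- Let d be a positive integer and let G be a d-minor sparse finite simple graph. Let A and B be two dominating sets of G such that |A| = |B| and |B \ A| ≥ d. Then there exists a vertex a ∈ A \ B and a set S ⊆ B \ A with |S| = d − 1 such that (A ∪ S) \ {a} is a dominating set of G. -/
open Finset SimpleGraph

variable {V : Type*}

section Aux

variable {V : Type} [Fintype V] [DecidableEq V]

open Classical in
noncomputable def privSet (G : SimpleGraph V) (A : Finset V) (a : V) : Finset V :=
  Finset.univ.filter (fun v => (a = v ∨ G.Adj a v) ∧ ∀ u ∈ A, (u = v ∨ G.Adj u v) → u = a)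

noncomputable def branchSet (G : SimpleGraph V) (A B : Finset V) (a : V) : Finset V :=
  insert a (privSet G A a \ (B \ A))

open Classical in
noncomputable def saSet (G : SimpleGraph V) (A B : Finset V) (a : V) : Finset V :=
  (B \ A).filter (fun b => ∃ u ∈ branchSet G A B a, G.Adj u b)

lemma mem_privSet {G : SimpleGraph V} {A : Finset V} {a v : V} :
    v ∈ privSet G A a ↔
      (a = v ∨ G.Adj a v) ∧ ∀ u ∈ A, (u = v ∨ G.Adj u v) → u = a := by
  classical
  simp [privSet]

lemma branchSet_star {G : SimpleGraph V} {A B : Finset V} {a v : V}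
    (hv : v ∈ branchSet G A B a) : v = a ∨ G.Adj a v := by
  rcases Finset.mem_insert.1 hv with h | h
  · exact Or.inl h
  · rcases (mem_privSet.1 (Finset.mem_sdiff.1 h).1).1 with h' | h'
    · exact Or.inl h'.symm
    · exact Or.inr h'

lemma mem_branchSet_self {G : SimpleGraph V} {A B : Finset V} {a : V} :
    a ∈ branchSet G A B a := Finset.mem_insert_self _ _

lemma branchSet_eq_of_mem {G : SimpleGraph V} {A B : Finset V} {a a' x : V}
    (ha : a ∈ A) (ha' : a' ∈ A)
    (hx : x ∈ branchSet G A B a) (hx' : x ∈ branchSet G A B a') : a = a' := by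
  have key : ∀ b c : V, b ∈ A → x ∈ branchSet G A B b → x ∈ privSet G A c → b = c := by
    intro b c hb hxb hxc
    rcases branchSet_star hxb with h | h
    · exact (mem_privSet.1 hxc).2 b hb (Or.inl h.symm)
    · exact (mem_privSet.1 hxc).2 b hb (Or.inr h)
  rcases Finset.mem_insert.1 hx with h | h
  · rcases Finset.mem_insert.1 hx' with h' | h'
    · exact h.symm.trans h'
    · -- x = a and x ∈ privSet G A a'
      exact (mem_privSet.1 (Finset.mem_sdiff.1 h').1).2 a ha (Or.inl h.symm)
  · exact (key a' a ha' hx' (Finset.mem_sdiff.1 h).1).symm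
  
lemma not_mem_branchSet {G : SimpleGraph V} {A B : Finset V} {a b : V}
    (ha : a ∈ A) (hb : b ∈ B \ A) : b ∉ branchSet G A B a := by
  intro h
  rcases Finset.mem_insert.1 h with h | h
  · exact (Finset.mem_sdiff.1 hb).2 (h ▸ ha)
  · exact (Finset.mem_sdiff.1 h).2 hb

lemma saSet_dominates {G : SimpleGraph V} {A B : Finset V} (hB : IsDomSet G B)
    {a : V} (ha : a ∈ A \ B) {v : V}
    (h1 : a = v ∨ G.Adj a v)
    (h2 : ∀ u ∈ A, (u = v ∨ G.Adj u v) → u = a) :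
    ∃ b ∈ saSet G A B a, b = v ∨ G.Adj b v := by
  classical
  have haA : a ∈ A := (Finset.mem_sdiff.1 ha).1
  have haB : a ∉ B := (Finset.mem_sdiff.1 ha).2
  have hvP : v ∈ privSet G A a := mem_privSet.2 ⟨h1, h2⟩
  by_cases hvBA : v ∈ B \ A
  · -- v dominates itself, and v ∈ saSet since a -adj- v
    have hav : G.Adj a v := by
      rcases h1 with h | h
      · exact absurd (h ▸ haA) (Finset.mem_sdiff.1 hvBA).2
      · exact h
    refine ⟨v, ?_, Or.inl rfl⟩
    simp only [saSet, Finset.mem_filter]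
    exact ⟨hvBA, a, mem_branchSet_self, hav⟩
  · have hvBr : v ∈ branchSet G A B a := by
      by_cases hva : v = a
      · exact hva ▸ mem_branchSet_self
      · exact Finset.mem_insert_of_mem (Finset.mem_sdiff.2 ⟨hvP, hvBA⟩)
    rcases hB v with hvB | ⟨u, huB, huv⟩
    · -- v ∈ B; since v ∉ B \ A, v ∈ A, so v = a, so a ∈ B, contradiction
      have hvA : v ∈ A := by
        by_contra hvA
        exact hvBA (Finset.mem_sdiff.2 ⟨hvB, hvA⟩)
      have : v = a := h2 v hvA (Or.inl rfl)
      exact absurd (this ▸ hvB) haB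
    · have huA : u ∉ A := by
        intro huA
        have : u = a := h2 u huA (Or.inr huv)
        exact haB (this ▸ huB)
      refine ⟨u, ?_, Or.inr huv⟩
      simp only [saSet, Finset.mem_filter]
      exact ⟨Finset.mem_sdiff.2 ⟨huB, huA⟩, v, hvBr, huv.symm⟩

lemma star_connected (G : SimpleGraph V) (s : Set V) (a : V) (ha : a ∈ s)
    (h : ∀ v ∈ s, v = a ∨ G.Adj a v) : (G.induce s).Connected := by
  rw [SimpleGraph.connected_iff]
  refine ⟨?_, ⟨⟨a, ha⟩⟩⟩
  intro u v
  have key : ∀ w : s, (G.induce s).Reachable ⟨a, ha⟩ w := by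
    rintro ⟨w, hw⟩
    rcases h w hw with rfl | hadj
    · exact SimpleGraph.Reachable.refl _
    · exact SimpleGraph.Adj.reachable (by simpa using hadj)
  exact (key u).symm.trans (key v)

end Aux

/-- In a `d`-minor sparse graph, if `A, B` are dominating sets with `|A| = |B|` and
`|B \ A| ≥ d`, there exist `a ∈ A \ B` and `S ⊆ B \ A` with `|S| = d − 1` such that
`(A ∪ S) \ {a}` is a dominating set. -/
theorem stmt3 {V : Type} [Fintype V] [DecidableEq V] (G : SimpleGraph V) (d : ℕ)
    (hd : 0 < d) (hG : MinorSparse G d) (A B : Finset V)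
    (hA : IsDomSet G A) (hB : IsDomSet G B)
    (hAB : A.card = B.card) (hBA : d ≤ (B \ A).card) :
    ∃ a ∈ A \ B, ∃ S ⊆ B \ A, S.card = d - 1 ∧ IsDomSet G ((A ∪ S).erase a) := by
  classical
  have hABcard : (A \ B).card = (B \ A).card := Finset.card_sdiff_comm hAB
  have hdBA : d - 1 ≤ (B \ A).card := le_trans (Nat.sub_le d 1) hBA
  by_cases hgood : ∃ a ∈ A \ B, (saSet G A B a).card ≤ d - 1
  · obtain ⟨a, haAB, hcard⟩ := hgood
    have hSa : saSet G A B a ⊆ B \ A := Finset.filter_subset _ _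
    obtain ⟨S, hSaS, hSBA, hScard⟩ :=
      Finset.exists_subsuperset_card_eq hSa hcard hdBA
    refine ⟨a, haAB, S, hSBA, hScard, ?_⟩
    intro v
    by_cases hva : ∃ u ∈ A, (u = v ∨ G.Adj u v) ∧ u ≠ a
    · obtain ⟨u, huA, hdom, hne⟩ := hva
      rcases hdom with rfl | hadj
      · exact Or.inl (Finset.mem_erase.2 ⟨hne, Finset.mem_union_left _ huA⟩)
      · exact Or.inr ⟨u, Finset.mem_erase.2 ⟨hne, Finset.mem_union_left _ huA⟩, hadj⟩
    · push_neg at hva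
      have h2 : ∀ u ∈ A, (u = v ∨ G.Adj u v) → u = a := hva
      have h1 : a = v ∨ G.Adj a v := by
        rcases hA v with hvA | ⟨u, huA, hadj⟩
        · exact Or.inl (h2 v hvA (Or.inl rfl)).symm
        · have := h2 u huA (Or.inr hadj)
          exact Or.inr (this ▸ hadj)
      obtain ⟨b, hbSa, hbdom⟩ := saSet_dominates hB haAB h1 h2
      have hbS : b ∈ S := hSaS hbSa
      have hbBA : b ∈ B \ A := hSa hbSa
      have hba : b ≠ a := by
        intro h
        exact (Finset.mem_sdiff.1 hbBA).2 (h ▸ (Finset.mem_sdiff.1 haAB).1)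
      rcases hbdom with rfl | hadj
      · exact Or.inl (Finset.mem_erase.2 ⟨hba, Finset.mem_union_right _ hbS⟩)
      · exact Or.inr ⟨b, Finset.mem_erase.2 ⟨hba, Finset.mem_union_right _ hbS⟩, hadj⟩
  · -- bad case: every a ∈ A \ B has saSet of size ≥ d; build a dense bipartite minor
    exfalso
    push_neg at hgood
    have hbig : ∀ a ∈ A \ B, d ≤ (saSet G A B a).card := by
      intro a ha
      have := hgood a ha
      omega
    set α := {x // x ∈ A \ B} with hα
    set β := {x // x ∈ B \ A} with hβ
    set m := Fintype.card (α ⊕ β) with hm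
    set e : (α ⊕ β) ≃ Fin m := Fintype.equivFin (α ⊕ β) with he
    set H₀ : SimpleGraph (α ⊕ β) := SimpleGraph.fromRel
      (fun x y => ∃ (a : α) (b : β), x = Sum.inl a ∧ y = Sum.inr b ∧ b.1 ∈ saSet G A B a.1)
      with hH₀
    set H : SimpleGraph (Fin m) := SimpleGraph.comap e.symm H₀ with hH
    have hmval : m = (A \ B).card + (B \ A).card := by
      rw [hm, Fintype.card_sum]
      congr 1 <;> exact Fintype.card_coe _
    have hmpos : 0 < m := by
      have : 0 < (B \ A).card := lt_of_lt_of_le hd hBA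
      omega
    -- H₀ adjacency characterization
    have hadjH : ∀ i j : Fin m, H.Adj i j ↔ H₀.Adj (e.symm i) (e.symm j) := fun i j => Iff.rfl
    have hadjH₀ : ∀ x y : α ⊕ β, H₀.Adj x y →
        (∃ (a : α) (b : β), x = Sum.inl a ∧ y = Sum.inr b ∧ b.1 ∈ saSet G A B a.1) ∨
        (∃ (a : α) (b : β), y = Sum.inl a ∧ x = Sum.inr b ∧ b.1 ∈ saSet G A B a.1) := by
      intro x y hxy
      exact hxy.2
    -- The branch set function
    set f : Fin m → Set V := fun i =>
      Sum.elim (fun a : α => ((branchSet G A B a.1 : Finset V) : Set V)) (fun b : β => {b.1})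
        (e.symm i) with hf
    -- H is a minor of G
    have hminor : IsMinor H G := by
      refine ⟨f, ?_, ?_, ?_, ?_⟩
      · intro i
        rcases hsum : e.symm i with a | b
        · exact ⟨a.1, by simp [hf, hsum, mem_branchSet_self]⟩
        · exact ⟨b.1, by simp [hf, hsum]⟩
      · intro i
        show (G.induce (Sum.elim _ _ (e.symm i))).Connected
        rcases hsum : e.symm i with a | b
        · exact star_connected G ((branchSet G A B a.1 : Finset V) : Set V) a.1
            (by simpa using mem_branchSet_self)
            (by intro v hv; exact branchSet_star (by simpa using hv))
        · exact star_connected G ({b.1} : Set V) b.1 rfl (by rintro v rfl; exact Or.inl rfl)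
      · intro i j hij
        have hne : e.symm i ≠ e.symm j := fun h => hij (e.symm.injective h)
        simp only [hf]
        rcases hsi : e.symm i with a | b <;> rcases hsj : e.symm j with a' | b'
        · have haa' : a ≠ a' := by rintro rfl; exact hne (hsi.trans hsj.symm)
          have haa'' : a.1 ≠ a'.1 := fun h => haa' (Subtype.ext h)
          simp only [Sum.elim_inl]
          rw [Set.disjoint_left]
          intro x hx hx'
          exact haa'' (branchSet_eq_of_mem (Finset.mem_sdiff.1 a.2).1
            (Finset.mem_sdiff.1 a'.2).1 (by simpa using hx) (by simpa using hx'))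
        · simp only [Sum.elim_inl, Sum.elim_inr]
          rw [Set.disjoint_right]
          rintro x rfl hx
          exact not_mem_branchSet (Finset.mem_sdiff.1 a.2).1 b'.2 (by simpa using hx)
        · simp only [Sum.elim_inl, Sum.elim_inr]
          rw [Set.disjoint_left]
          rintro x rfl hx
          exact not_mem_branchSet (Finset.mem_sdiff.1 a'.2).1 b.2 (by simpa using hx)
        · have hbb' : b ≠ b' := by rintro rfl; exact hne (hsi.trans hsj.symm)
          simp only [Sum.elim_inr]
          rw [Set.disjoint_left]
          rintro x rfl hx
          exact hbb' (Subtype.ext hx.symm ▸ rfl)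
      · intro i j hij
        rcases hadjH₀ _ _ ((hadjH i j).1 hij) with ⟨a, b, hx, hy, hsa⟩ | ⟨a, b, hy, hx, hsa⟩
        · obtain ⟨u, huBr, huadj⟩ := (Finset.mem_filter.1 hsa).2
          exact ⟨u, by simp [hf, hx, huBr], b.1, by simp [hf, hy], huadj⟩
        · obtain ⟨u, huBr, huadj⟩ := (Finset.mem_filter.1 hsa).2
          exact ⟨b.1, by simp [hf, hx], u, by simp [hf, hy, huBr], huadj.symm⟩
    -- H is bipartite
    have hcol : H.Colorable 2 := by
      refine ⟨SimpleGraph.Coloring.mk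
        (fun i => Sum.elim (fun _ => (0 : Fin 2)) (fun _ => 1) (e.symm i)) ?_⟩
      intro i j hij
      rcases hadjH₀ _ _ ((hadjH i j).1 hij) with ⟨a, b, hx, hy, _⟩ | ⟨a, b, hy, hx, _⟩
      · simp [hx, hy]
      · simp [hx, hy]
    -- edge count
    have hsparse := hG m hmpos H hminor hcol
    -- build the injection from pairs into edges
    set T : Finset (V × V) :=
      ((A \ B) ×ˢ (B \ A)).filter (fun p => p.2 ∈ saSet G A B p.1) with hT
    have hTcard : (A \ B).card * d ≤ T.card := by
      have hfib : ∀ p ∈ T, p.1 ∈ A \ B := by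
        intro p hp
        exact (Finset.mem_product.1 (Finset.mem_filter.1 hp).1).1
      rw [Finset.card_eq_sum_card_fiberwise hfib]
      have : ∀ a ∈ A \ B, d ≤ (T.filter (fun p => p.1 = a)).card := by
        intro a ha
        have himg : (saSet G A B a).image (fun b => (a, b)) ⊆ T.filter (fun p => p.1 = a) := by
          intro p hp
          obtain ⟨b, hb, rfl⟩ := Finset.mem_image.1 hp
          refine Finset.mem_filter.2 ⟨Finset.mem_filter.2 ⟨?_, hb⟩, rfl⟩
          exact Finset.mem_product.2 ⟨ha, Finset.filter_subset _ _ hb⟩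
        have := Finset.card_le_card himg
        rw [Finset.card_image_of_injective _ (fun b b' h => by simpa using congrArg Prod.snd h)]
          at this
        exact le_trans (hbig a ha) this
      calc (A \ B).card * d = ∑ _a ∈ A \ B, d := by rw [Finset.sum_const, smul_eq_mul, mul_comm]
        _ ≤ ∑ a ∈ A \ B, (T.filter (fun p => p.1 = a)).card := Finset.sum_le_sum this
    -- map pairs to edges
    set g : V × V → Sym2 (Fin m) := fun p =>
      if h : p.1 ∈ A \ B ∧ p.2 ∈ B \ A
      then s(e (Sum.inl ⟨p.1, h.1⟩), e (Sum.inr ⟨p.2, h.2⟩))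
      else s(⟨0, hmpos⟩, ⟨0, hmpos⟩) with hg
    have hmemT : ∀ p ∈ T, p.1 ∈ A \ B ∧ p.2 ∈ B \ A := by
      intro p hp
      exact Finset.mem_product.1 (Finset.mem_filter.1 hp).1
    have hmaps : ∀ p ∈ T, g p ∈ H.edgeSet := by
      intro p hp
      have h := hmemT p hp
      have hsa : p.2 ∈ saSet G A B p.1 := (Finset.mem_filter.1 hp).2
      rw [hg]
      simp only [dif_pos h]
      rw [SimpleGraph.mem_edgeSet]
      show H₀.Adj (e.symm (e (Sum.inl ⟨p.1, h.1⟩))) (e.symm (e (Sum.inr ⟨p.2, h.2⟩)))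
      rw [e.symm_apply_apply, e.symm_apply_apply]
      exact ⟨by simp, Or.inl ⟨⟨p.1, h.1⟩, ⟨p.2, h.2⟩, rfl, rfl, hsa⟩⟩
    have hinj : Set.InjOn g T := by
      intro p hp p' hp' hgpp'
      have h := hmemT p hp
      have h' := hmemT p' hp'
      rw [hg] at hgpp'
      simp only [dif_pos h, dif_pos h'] at hgpp'
      rw [Sym2.eq_iff] at hgpp'
      rcases hgpp' with ⟨h1, h2⟩ | ⟨h1, h2⟩
      · have h1' := e.injective h1
        have h2' := e.injective h2
        have : p.1 = p'.1 := congrArg Subtype.val (Sum.inl.inj h1')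
        have : p.2 = p'.2 := congrArg Subtype.val (Sum.inr.inj h2')
        exact Prod.ext ‹p.1 = p'.1› this
      · exact absurd (e.injective h1) (by simp)
    have hedge : T.card ≤ H.edgeSet.ncard := by
      have hsub : ((T.image g : Finset (Sym2 (Fin m))) : Set (Sym2 (Fin m))) ⊆ H.edgeSet := by
        intro x hx
        obtain ⟨p, hp, rfl⟩ := Finset.mem_image.1 (Finset.mem_coe.1 hx)
        exact hmaps p hp
      have := Set.ncard_le_ncard hsub (Set.toFinite _)
      rw [Set.ncard_coe_finset] at this
      rwa [Finset.card_image_of_injOn hinj] at this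
    have : d * m ≤ 2 * H.edgeSet.ncard := by
      calc d * m = 2 * ((A \ B).card * d) := by rw [hmval, ← hABcard]; ring
        _ ≤ 2 * T.card := by omega
        _ ≤ 2 * H.edgeSet.ncard := by omega
    omega
end

section
/- Let G be a finite simple graph on n vertices with treewidth tw(G). If k = Γ(G) + tw(G) + 1, then the k-reconfiguration graph R_k(G) is connected, and its diameter is at most 4(n+1)·(tw(G)+1). -/
open Finset SimpleGraph

variable {V : Type*}

set_option linter.unusedSectionVars false

section Basics

variable {V : Type} [Fintype V] [DecidableEq V] (G : SimpleGraph V)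

lemma isDomSet_mono {D E : Finset V} (h : D ⊆ E) (hD : IsDomSet G D) : IsDomSet G E := by
  intro v
  rcases hD v with hv | ⟨u, hu, huv⟩
  · exact Or.inl (h hv)
  · exact Or.inr ⟨u, h hu, huv⟩

lemma isDomSet_univ : IsDomSet G (Finset.univ : Finset V) := fun v => Or.inl (Finset.mem_univ v)

/-- every dominating set contains a minimal dominating set -/
lemma exists_minimal_subset {D : Finset V} (hD : IsDomSet G D) :
    ∃ M ⊆ D, Minimal (IsDomSet G) M := by
  obtain ⟨n, hn⟩ : ∃ n, D.card = n := ⟨D.card, rfl⟩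
  induction n using Nat.strong_induction_on generalizing D with
  | _ n ih =>
    by_cases hmin : Minimal (IsDomSet G) D
    · exact ⟨D, subset_rfl, hmin⟩
    · rw [Minimal] at hmin
      push_neg at hmin
      obtain ⟨E, hE, hED, hnDE⟩ := hmin hD
      have hssub : E ⊂ D := lt_of_le_of_ne hED (fun h => hnDE (le_of_eq h.symm))
      obtain ⟨M, hME, hM⟩ := ih E.card (by rw [← hn]; exact Finset.card_lt_card hssub) hE rfl
      exact ⟨M, hME.trans hssub.subset, hM⟩

lemma minimal_card_le_gammaU {M : Finset V} (hM : Minimal (IsDomSet G) M) :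
    M.card ≤ gammaU G := by
  apply le_csSup
  · refine ⟨Fintype.card V, fun n hn => ?_⟩
    obtain ⟨D, _, rfl⟩ := hn
    exact D.card_le_univ.trans_eq (Finset.card_univ)
  · exact ⟨M, hM, rfl⟩

lemma gammaU_le_card : gammaU G ≤ Fintype.card V := by
  apply csSup_le
  · obtain ⟨M, _, hM⟩ := exists_minimal_subset G (isDomSet_univ G)
    exact ⟨M.card, M, hM, rfl⟩
  · rintro n ⟨D, _, rfl⟩
    exact D.card_le_univ.trans_eq (Finset.card_univ)

lemma hasTreeDecomp_treewidth : HasTreeDecompOfWidth G (treewidth G) := by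
  have hne : {w | HasTreeDecompOfWidth G w}.Nonempty := by
    refine ⟨Fintype.card V, 1, ⊥, fun _ => Finset.univ, ?_, ?_, ?_, ?_, ?_⟩
    · constructor
      · constructor
        intro a b
        have : a = b := Subsingleton.elim a b
        subst this; exact SimpleGraph.Reachable.refl a
      · exact SimpleGraph.isAcyclic_bot
    · exact fun v => ⟨0, Finset.mem_univ v⟩
    · exact fun u v _ => ⟨0, Finset.mem_univ u, Finset.mem_univ v⟩
    · intro v
      haveI : Nonempty {i : Fin 1 | v ∈ (Finset.univ : Finset V)} := ⟨⟨0, by simp⟩⟩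
      constructor
      intro a b
      have : a = b := Subsingleton.elim a b
      subst this; exact SimpleGraph.Reachable.refl a
    · intro i; simp
  exact Nat.sInf_mem hne

end Basics

section Reconf

variable {V : Type} [Fintype V] [DecidableEq V] {G : SimpleGraph V} {k : ℕ}

lemma reconf_adj_erase (A : Finset V) (o : V) (ho : o ∈ A)
    (hA : IsDomSet G A ∧ A.card ≤ k) (hA' : IsDomSet G (A.erase o) ∧ (A.erase o).card ≤ k) :
    (reconfGraph G k).Adj ⟨A, hA⟩ ⟨A.erase o, hA'⟩ := by
  show (symmDiff A (A.erase o)).card = 1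
  have h1 : A \ A.erase o = {o} := by
    ext x
    simp only [Finset.mem_sdiff, Finset.mem_erase, Finset.mem_singleton]
    constructor
    · rintro ⟨hx, h⟩
      by_contra hne
      exact h ⟨hne, hx⟩
    · rintro rfl
      exact ⟨ho, fun h => h.1 rfl⟩
  have h2 : A.erase o \ A = ∅ := Finset.sdiff_eq_empty_iff_subset.2 (A.erase_subset o)
  rw [symmDiff_def]
  show (A \ A.erase o ∪ A.erase o \ A).card = 1
  rw [h1, h2]
  simp

lemma walk_down_aux (n : ℕ) :
    ∀ (A B : {D : Finset V // IsDomSet G D ∧ D.card ≤ k}), B.val ⊆ A.val →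
      (A.val \ B.val).card = n →
      ∃ p : (reconfGraph G k).Walk A B, p.length = n := by
  induction n with
  | zero =>
    intro A B hBA h0
    have : A.val \ B.val = ∅ := Finset.card_eq_zero.mp h0
    have hAB : A.val = B.val :=
      Finset.Subset.antisymm (fun x hx => by
        by_contra hxB
        have hmem : x ∈ A.val \ B.val := Finset.mem_sdiff.2 ⟨hx, hxB⟩
        rw [this] at hmem
        exact absurd hmem (Finset.notMem_empty x)) hBA
    have : A = B := Subtype.ext hAB
    subst this
    exact ⟨SimpleGraph.Walk.nil, rfl⟩
  | succ n ih =>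
    intro A B hBA h
    have hne : (A.val \ B.val).Nonempty := by
      rw [← Finset.card_pos, h]; exact Nat.succ_pos n
    obtain ⟨o, ho⟩ := hne
    rw [Finset.mem_sdiff] at ho
    have hsub : B.val ⊆ A.val.erase o := Finset.subset_erase.2 ⟨hBA, ho.2⟩
    have hA' : IsDomSet G (A.val.erase o) ∧ (A.val.erase o).card ≤ k :=
      ⟨isDomSet_mono G hsub B.prop.1, le_trans (Finset.card_le_card (A.val.erase_subset o)) A.prop.2⟩
    have hcard : (A.val.erase o \ B.val).card = n := by
      have : A.val.erase o \ B.val = (A.val \ B.val).erase o := by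
        ext x
        simp only [Finset.mem_sdiff, Finset.mem_erase]
        tauto
      rw [this, Finset.card_erase_of_mem (Finset.mem_sdiff.2 ho), h]
      rfl
    obtain ⟨p, hp⟩ := ih ⟨A.val.erase o, hA'⟩ B hsub hcard
    exact ⟨SimpleGraph.Walk.cons (reconf_adj_erase A.val o ho.1 A.prop hA') p, by simp [hp]⟩

/-- From a dominating set down to a dominating subset. -/
lemma walk_down (A B : {D : Finset V // IsDomSet G D ∧ D.card ≤ k}) (hBA : B.val ⊆ A.val) :
    ∃ p : (reconfGraph G k).Walk A B, p.length = (A.val \ B.val).card :=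
  walk_down_aux _ A B hBA rfl

lemma walk_up (A B : {D : Finset V // IsDomSet G D ∧ D.card ≤ k}) (hAB : A.val ⊆ B.val) :
    ∃ p : (reconfGraph G k).Walk A B, p.length = (B.val \ A.val).card := by
  obtain ⟨p, hp⟩ := walk_down B A hAB
  exact ⟨p.reverse, by simp [hp]⟩

end Reconf

section TreeLemmas

open SimpleGraph

variable {ι : Type*} [DecidableEq ι] {T : SimpleGraph ι}

/-- the unique path in a tree -/
noncomputable def thePath (hT : T.IsTree) (r u : ι) : T.Walk r u :=
  (hT.existsUnique_path r u).choose

lemma thePath_isPath (hT : T.IsTree) (r u : ι) : (thePath hT r u).IsPath :=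
  (hT.existsUnique_path r u).choose_spec.1

lemma thePath_unique (hT : T.IsTree) {r u : ι} (p : T.Walk r u) (hp : p.IsPath) :
    p = thePath hT r u :=
  (hT.existsUnique_path r u).choose_spec.2 p hp

lemma length_thePath (hT : T.IsTree) (r u : ι) : (thePath hT r u).length = T.dist r u := by
  refine le_antisymm ?_ (SimpleGraph.dist_le _)
  obtain ⟨q, hq⟩ := (hT.isConnected.preconnected r u).exists_walk_length_eq_dist
  have hbp : q.bypass = thePath hT r u := thePath_unique hT q.bypass q.bypass_isPath
  calc (thePath hT r u).length = q.bypass.length := by rw [hbp]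
    _ ≤ q.length := q.length_bypass_le
    _ = T.dist r u := hq

lemma concat_isPath' {u v x : ι} {p : T.Walk u v} (hp : p.IsPath) (h : T.Adj v x)
    (hx : x ∉ p.support) : (p.concat h).IsPath := by
  rw [← SimpleGraph.Walk.isPath_reverse_iff, SimpleGraph.Walk.reverse_concat]
  apply SimpleGraph.Walk.IsPath.cons
  · rwa [SimpleGraph.Walk.isPath_reverse_iff]
  · rwa [SimpleGraph.Walk.support_reverse, List.mem_reverse]

/-- Gate lemma: in a tree, the element of a walk-connected set `S` closest to the root `r`
lies on the unique path from `r` to any element of `S`. -/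
lemma tree_gate (hT : T.IsTree) {S : Set ι} {r t : ι}
    (hmin : ∀ j ∈ S, T.dist r t ≤ T.dist r j) {c : ι}
    (q : T.Walk c t) (hq : ∀ z ∈ q.support, z ∈ S) :
    t ∈ (thePath hT r c).support := by
  induction q with
  | nil => exact SimpleGraph.Walk.end_mem_support _
  | @cons c c₂ t hadj q' ih =>
    have hc : c ∈ S := hq c (SimpleGraph.Walk.start_mem_support _)
    have ht' : t ∈ (thePath hT r c₂).support := by
      apply ih hmin
      intro z hz
      exact hq z (by rw [SimpleGraph.Walk.support_cons]; exact List.mem_cons_of_mem _ hz)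
    by_cases hcp : c ∈ (thePath hT r c₂).support
    · -- split the path to c₂ at c
      have htake : (thePath hT r c₂).takeUntil c hcp = thePath hT r c :=
        thePath_unique hT _ ((thePath_isPath hT r c₂).takeUntil hcp)
      have hdropPath : ((thePath hT r c₂).dropUntil c hcp).IsPath :=
        (thePath_isPath hT r c₂).dropUntil hcp
      -- the dropped part is a path from c to c₂, so it is the single edge
      have hedge : (SimpleGraph.Walk.cons hadj SimpleGraph.Walk.nil : T.Walk c c₂).IsPath := by
        rw [SimpleGraph.Walk.cons_isPath_iff]
        exact ⟨SimpleGraph.Walk.IsPath.nil, by simp [hadj.ne]⟩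
      have huniq : (thePath hT r c₂).dropUntil c hcp
          = SimpleGraph.Walk.cons hadj SimpleGraph.Walk.nil :=
        (thePath_unique hT _ hdropPath).trans (thePath_unique hT _ hedge).symm
      have hsplit := SimpleGraph.Walk.take_spec (thePath hT r c₂) hcp
      rw [← hsplit, SimpleGraph.Walk.mem_support_append_iff] at ht'
      rcases ht' with h1 | h2
      · rw [htake] at h1; exact h1
      · rw [huniq] at h2
        simp only [SimpleGraph.Walk.support_cons, SimpleGraph.Walk.support_nil,
          List.mem_cons, List.mem_singleton] at h2
        rcases h2 with rfl | h2
        · exact SimpleGraph.Walk.end_mem_support _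
        · rcases h2 with h2 | h2
          swap
          · exact absurd h2 (List.not_mem_nil (a := t))
          -- t = c₂ : contradiction with minimality of dist r t
          exfalso
          have hlen : ((thePath hT r c₂).takeUntil c hcp).length + 1
              = (thePath hT r c₂).length := by
            conv_rhs => rw [← hsplit]
            rw [SimpleGraph.Walk.length_append, huniq]
            simp
          have h1 : T.dist r c + 1 = T.dist r c₂ := by
            rw [← length_thePath hT r c, ← length_thePath hT r c₂, ← htake]
            exact hlen
          have h3 := hmin c hc
          rw [h2] at h3
          omega
    · -- extend the path to c₂ by the edge c₂ - c
      have hconc : ((thePath hT r c₂).concat hadj.symm) = thePath hT r c :=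
        thePath_unique hT _ (concat_isPath' (thePath_isPath hT r c₂) hadj.symm hcp)
      rw [← hconc, SimpleGraph.Walk.support_concat, List.mem_append]
      exact Or.inl ht'

/-- extract a walk inside `s` from connectivity of the induced graph -/
lemma walks_of_induce_connected {α : Type*} {Gr : SimpleGraph α} {s : Set α}
    (h : (Gr.induce s).Connected) {a b : α} (ha : a ∈ s) (hb : b ∈ s) :
    ∃ p : Gr.Walk a b, ∀ z ∈ p.support, z ∈ s := by
  have key : ∀ (x y : s) (_ : (Gr.induce s).Walk x y),
      ∃ p : Gr.Walk x.val y.val, ∀ z ∈ p.support, z ∈ s := by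
    intro x y q
    induction q with
    | nil => exact ⟨SimpleGraph.Walk.nil, by simp [Subtype.coe_prop]⟩
    | @cons a' b' c' hadj q' ih =>
      obtain ⟨p, hp⟩ := ih
      have hadj' : Gr.Adj a'.val b'.val := by
        simpa using hadj
      refine ⟨SimpleGraph.Walk.cons hadj' p, ?_⟩
      intro z hz
      rw [SimpleGraph.Walk.support_cons] at hz
      rcases List.mem_cons.mp hz with rfl | hz
      · exact a'.prop
      · exact hp z hz
  obtain ⟨q⟩ := h.preconnected ⟨a, ha⟩ ⟨b, hb⟩
  exact key ⟨a, ha⟩ ⟨b, hb⟩ q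

end TreeLemmas

section MinorDegree

open SimpleGraph Finset

lemma minor_min_degree {V : Type} [Fintype V] [DecidableEq V] {G : SimpleGraph V} {w : ℕ}
    {m : ℕ} {T : SimpleGraph (Fin m)} {bags : Fin m → Finset V}
    (hT : T.IsTree)
    (hcov : ∀ v : V, ∃ i, v ∈ bags i)
    (hedge : ∀ u v : V, G.Adj u v → ∃ i, u ∈ bags i ∧ v ∈ bags i)
    (hconn : ∀ v : V, (T.induce {i | v ∈ bags i}).Connected)
    (hw : ∀ i, (bags i).card ≤ w + 1)
    {W : Type} [Fintype W] (H : SimpleGraph W) [DecidableRel H.Adj]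
    (hne : Nonempty W)
    (f : W → Set V) (hfne : ∀ x, (f x).Nonempty) (hfconn : ∀ x, (G.induce (f x)).Connected)
    (hfdisj : ∀ x y, x ≠ y → Disjoint (f x) (f y))
    (hfadj : ∀ x y, H.Adj x y → ∃ u ∈ f x, ∃ v ∈ f y, G.Adj u v) :
    ∃ x : W, H.degree x ≤ w := by
  classical
  obtain ⟨x₀⟩ := hne
  haveI : Nonempty V := ⟨(hfne x₀).choose⟩
  -- the set of tree nodes whose bag meets the branch set of x
  set Sx : W → Finset (Fin m) := fun x => univ.filter (fun i => ∃ v ∈ f x, v ∈ bags i) with hSx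
  have hSmem : ∀ x i, i ∈ Sx x ↔ ∃ v ∈ f x, v ∈ bags i := by
    intro x i; simp [hSx]
  have hSxne : ∀ x, (Sx x).Nonempty := by
    intro x
    obtain ⟨v, hv⟩ := hfne x
    obtain ⟨i, hi⟩ := hcov v
    exact ⟨i, (hSmem x i).2 ⟨v, hv, hi⟩⟩
  -- each node belongs to Sx of at most w+1 many x's
  have hcount : ∀ i : Fin m, (univ.filter (fun x : W => i ∈ Sx x)).card ≤ w + 1 := by
    intro i
    refine le_trans (Finset.card_le_card_of_injOn
      (fun x => Classical.epsilon (fun v => v ∈ f x ∧ v ∈ bags i)) ?_ ?_) (hw i)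
    · intro x hx
      rw [Finset.mem_coe, Finset.mem_filter] at hx
      obtain ⟨v, hv1, hv2⟩ := (hSmem x i).1 hx.2
      exact (Classical.epsilon_spec (⟨v, hv1, hv2⟩ : ∃ v, v ∈ f x ∧ v ∈ bags i)).2
    · intro x hx y hy hxy
      simp only [Finset.coe_filter, Set.mem_setOf_eq] at hx hy
      by_contra hne'
      obtain ⟨v, hv1, hv2⟩ := (hSmem x i).1 hx.2
      obtain ⟨v', hv1', hv2'⟩ := (hSmem y i).1 hy.2
      have h1 := (Classical.epsilon_spec (⟨v, hv1, hv2⟩ : ∃ v, v ∈ f x ∧ v ∈ bags i)).1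
      have h2 := (Classical.epsilon_spec (⟨v', hv1', hv2'⟩ : ∃ v, v ∈ f y ∧ v ∈ bags i)).1
      simp only [] at hxy
      rw [hxy] at h1
      exact (hfdisj x y hne').le_bot ⟨h1, h2⟩ |>.elim
  -- walk-connectivity of Sx
  have hSconn : ∀ (x : W) (i j : Fin m), i ∈ Sx x → j ∈ Sx x →
      ∃ p : T.Walk i j, ∀ z ∈ p.support, z ∈ (Sx x : Set (Fin m)) := by
    intro x i j hi hj
    obtain ⟨u, hu, hui⟩ := (hSmem x i).1 hi
    obtain ⟨u', hu', huj⟩ := (hSmem x j).1 hj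
    have aux : ∀ (a b : V) (q : G.Walk a b), (∀ z ∈ q.support, z ∈ f x) →
        ∀ i j : Fin m, a ∈ bags i → b ∈ bags j →
        ∃ p : T.Walk i j, ∀ z ∈ p.support, z ∈ (Sx x : Set (Fin m)) := by
      intro a b q
      induction q with
      | @nil a =>
        intro hq i j hai haj
        obtain ⟨p, hp⟩ := walks_of_induce_connected (hconn a) (hai : a ∈ bags i) haj
        refine ⟨p, fun z hz => ?_⟩
        have : a ∈ bags z := hp z hz
        exact (hSmem x z).2 ⟨a, hq a (SimpleGraph.Walk.start_mem_support _), this⟩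
      | @cons a b c hadj q' ih =>
        intro hq i j hai hcj
        obtain ⟨cbag, hcb1, hcb2⟩ := hedge a b hadj
        obtain ⟨p1, hp1⟩ := walks_of_induce_connected (hconn a) (hai : a ∈ bags i) hcb1
        have haS : a ∈ f x := hq a (SimpleGraph.Walk.start_mem_support _)
        obtain ⟨p2, hp2⟩ := ih (fun z hz => hq z (by rw [SimpleGraph.Walk.support_cons]; exact List.mem_cons_of_mem _ hz)) cbag j hcb2 hcj
        refine ⟨p1.append p2, fun z hz => ?_⟩
        rw [SimpleGraph.Walk.mem_support_append_iff] at hz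
        rcases hz with hz | hz
        · exact (hSmem x z).2 ⟨a, haS, hp1 z hz⟩
        · exact hp2 z hz
    obtain ⟨q, hq⟩ := walks_of_induce_connected (hfconn x) hu hu'
    exact aux u u' q hq i j hui huj
  -- root
  obtain ⟨r, _⟩ := hSxne x₀
  -- top bag of each branch set
  have htop : ∀ x : W, ∃ t ∈ Sx x, ∀ j ∈ Sx x, T.dist r t ≤ T.dist r j := by
    intro x
    obtain ⟨t, ht, hmin⟩ := Finset.exists_min_image (Sx x) (fun i => T.dist r i) (hSxne x)
    exact ⟨t, ht, hmin⟩
  choose top htopmem htopmin using htop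
  -- gate property
  have hgate : ∀ (x : W) (c : Fin m), c ∈ Sx x → top x ∈ (thePath hT r c).support := by
    intro x c hc
    obtain ⟨q, hq⟩ := hSconn x c (top x) hc (htopmem x)
    exact tree_gate hT (fun j hj => htopmin x j hj) q (fun z hz => by
      simpa using hq z hz)
  -- the branch set with the deepest top bag
  obtain ⟨xs, _, hxs⟩ := Finset.exists_max_image (univ : Finset W) (fun x => T.dist r (top x)) ⟨x₀, mem_univ x₀⟩
  refine ⟨xs, ?_⟩
  -- every H-neighbor y of xs satisfies top xs ∈ Sx y
  have hkey : ∀ y, H.Adj xs y → top xs ∈ Sx y := by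
    intro y hadj
    obtain ⟨u, hu, v, hv, huv⟩ := hfadj xs y hadj
    obtain ⟨c, hc1, hc2⟩ := hedge u v huv
    have hcxs : c ∈ Sx xs := (hSmem xs c).2 ⟨u, hu, hc1⟩
    have hcy : c ∈ Sx y := (hSmem y c).2 ⟨v, hv, hc2⟩
    have ht : top xs ∈ (thePath hT r c).support := hgate xs c hcxs
    have ht' : top y ∈ (thePath hT r c).support := hgate y c hcy
    -- split thePath r c at top y
    have htake : (thePath hT r c).takeUntil (top y) ht' = thePath hT r (top y) :=
      thePath_unique hT _ ((thePath_isPath hT r c).takeUntil ht')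
    have hsplit := SimpleGraph.Walk.take_spec (thePath hT r c) ht'
    rw [← hsplit, SimpleGraph.Walk.mem_support_append_iff] at ht
    rcases ht with ht | ht
    · -- top xs on the path r → top y : then top xs = top y by depth maximality
      rw [htake] at ht
      have h1 : T.dist r (top xs) ≤ T.dist r (top y) := by
        have h2 : ((thePath hT r (top y)).takeUntil (top xs) ht).length ≤ (thePath hT r (top y)).length :=
          SimpleGraph.Walk.length_takeUntil_le _ ht
        have h3 : (thePath hT r (top y)).takeUntil (top xs) ht = thePath hT r (top xs) :=
          thePath_unique hT _ ((thePath_isPath hT r (top y)).takeUntil ht)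
        rw [h3, length_thePath, length_thePath] at h2
        exact h2
      have h2 : T.dist r (top y) ≤ T.dist r (top xs) := hxs y (mem_univ y)
      -- equal distances: so top xs = top y
      have heq : T.dist r (top xs) = T.dist r (top y) := le_antisymm h1 h2
      have hdrop : ((thePath hT r (top y)).dropUntil (top xs) ht).length = 0 := by
        have hsp := SimpleGraph.Walk.take_spec (thePath hT r (top y)) ht
        have hlen : ((thePath hT r (top y)).takeUntil (top xs) ht).length
            + ((thePath hT r (top y)).dropUntil (top xs) ht).length
            = (thePath hT r (top y)).length := by
          conv_rhs => rw [← hsp]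
          rw [SimpleGraph.Walk.length_append]
        have h3 : (thePath hT r (top y)).takeUntil (top xs) ht = thePath hT r (top xs) :=
          thePath_unique hT _ ((thePath_isPath hT r (top y)).takeUntil ht)
        rw [h3, length_thePath, length_thePath, heq] at hlen
        omega
      have : top xs = top y := SimpleGraph.Walk.eq_of_length_eq_zero hdrop
      rw [this]
      exact htopmem y
    · -- top xs on the path (top y) → c, which lies inside Sx y
      obtain ⟨q, hq⟩ := hSconn y (top y) c (htopmem y) hcy
      have hqb : q.bypass = (thePath hT r c).dropUntil (top y) ht' := by
        refine (thePath_unique hT q.bypass q.bypass_isPath).trans ?_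
        exact (thePath_unique hT _ ((thePath_isPath hT r c).dropUntil ht')).symm
      have hsupp : ∀ z ∈ ((thePath hT r c).dropUntil (top y) ht').support, z ∈ Sx y := by
        intro z hz
        rw [← hqb] at hz
        exact hq z (q.support_bypass_subset hz)
      exact hsupp _ ht
  -- conclude
  have hsub : H.neighborFinset xs ⊆ (univ.filter (fun x : W => top xs ∈ Sx x)).erase xs := by
    intro y hy
    rw [SimpleGraph.mem_neighborFinset] at hy
    rw [Finset.mem_erase]
    exact ⟨hy.ne', Finset.mem_filter.2 ⟨mem_univ y, hkey y hy⟩⟩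
  have hxsmem : xs ∈ univ.filter (fun x : W => top xs ∈ Sx x) :=
    Finset.mem_filter.2 ⟨mem_univ xs, htopmem xs⟩
  calc H.degree xs = (H.neighborFinset xs).card := rfl
    _ ≤ ((univ.filter (fun x : W => top xs ∈ Sx x)).erase xs).card := Finset.card_le_card hsub
    _ = (univ.filter (fun x : W => top xs ∈ Sx x)).card - 1 := Finset.card_erase_of_mem hxsmem
    _ ≤ (w + 1) - 1 := Nat.sub_le_sub_right (hcount (top xs)) 1
    _ = w := rfl

end MinorDegree

section StepLemma

open SimpleGraph Finset

variable {V : Type} [Fintype V] [DecidableEq V]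

open Classical in
/-- the set of vertices of `M` dominating `u` -/
noncomputable def domBy (G : SimpleGraph V) (M : Finset V) (u : V) : Finset V :=
  M.filter (fun m => m = u ∨ G.Adj m u)

lemma mem_domBy {G : SimpleGraph V} {M : Finset V} {u m : V} :
    m ∈ domBy G M u ↔ m ∈ M ∧ (m = u ∨ G.Adj m u) := by
  classical
  simp [domBy]

lemma domBy_nonempty {G : SimpleGraph V} {M : Finset V} (hM : IsDomSet G M) (u : V) :
    (domBy G M u).Nonempty := by
  rcases hM u with h | ⟨v, hv, hadj⟩
  · exact ⟨u, mem_domBy.2 ⟨h, Or.inl rfl⟩⟩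
  · exact ⟨v, mem_domBy.2 ⟨hv, Or.inr hadj⟩⟩

/-- every element of a minimal dominating set has a private neighbor -/
lemma exists_private {G : SimpleGraph V} {M : Finset V} (hM : Minimal (IsDomSet G) M)
    {o : V} (ho : o ∈ M) : ∃ u, domBy G M u = {o} := by
  have herase : ¬ IsDomSet G (M.erase o) := by
    intro hyp
    have := hM.2 hyp (Finset.erase_subset o M)
    exact (Finset.notMem_erase o M) (this ho)
  rw [IsDomSet] at herase
  push_neg at herase
  obtain ⟨v, hv1, hv2⟩ := herase
  refine ⟨v, Finset.Subset.antisymm ?_ ?_⟩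
  · intro m hm
    rw [mem_domBy] at hm
    rw [Finset.mem_singleton]
    by_contra hmo
    have hmer : m ∈ M.erase o := Finset.mem_erase.2 ⟨hmo, hm.1⟩
    rcases hm.2 with rfl | hadj
    · exact hv1 hmer
    · exact hv2 m hmer hadj
  · intro m hm
    rw [Finset.mem_singleton] at hm
    rw [hm, mem_domBy]
    refine ⟨ho, ?_⟩
    rcases hM.1 v with hvM | ⟨u, huM, hadj⟩
    · left
      by_contra hov
      exact hv1 (Finset.mem_erase.2 ⟨fun h => hov h.symm, hvM⟩)
    · have : u = o := by
        by_contra huo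
        exact hv2 u (Finset.mem_erase.2 ⟨huo, huM⟩) hadj
      right; rw [← this]; exact hadj

/-- a "star" set is connected in the induced graph -/
lemma star_induce_connected {G : SimpleGraph V} {s : Set V} {cen : V} (hc : cen ∈ s)
    (h : ∀ v ∈ s, v = cen ∨ G.Adj cen v) : (G.induce s).Connected := by
  haveI : Nonempty s := ⟨⟨cen, hc⟩⟩
  constructor
  intro a b
  have key : ∀ x : s, (G.induce s).Reachable ⟨cen, hc⟩ x := by
    intro x
    rcases h x.val x.prop with heq | hadj
    · rw [show x = (⟨cen, hc⟩ : s) from Subtype.ext heq]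
    · exact SimpleGraph.Adj.reachable (by simpa using hadj)
  exact (key a).symm.trans (key b)

lemma step_exists {G : SimpleGraph V} {w : ℕ}
    (htd : HasTreeDecompOfWidth G w) {M N : Finset V}
    (hM : Minimal (IsDomSet G) M) (hN : Minimal (IsDomSet G) N) (hMN : M ≠ N) :
    (∃ o ∈ M, o ∉ N ∧ ∃ Y : Finset V, Y ⊆ N \ M ∧ Y.card ≤ w + 1 ∧
      IsDomSet G ((M ∪ Y).erase o))
    ∨ (∃ b ∈ N, b ∉ M ∧ ∃ Y : Finset V, Y ⊆ M \ N ∧ Y.card ≤ w + 1 ∧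
      IsDomSet G ((N ∪ Y).erase b)) := by
  classical
  -- both differences are nonempty
  have hMd : (M \ N).Nonempty := by
    rw [Finset.sdiff_nonempty]
    intro hsub
    exact hMN (Finset.Subset.antisymm hsub (hN.2 hM.1 hsub))
  have hNd : (N \ M).Nonempty := by
    rw [Finset.sdiff_nonempty]
    intro hsub
    exact hMN (Finset.Subset.antisymm (hM.2 hN.1 hsub) hsub)
  -- branch sets
  set g : {o : V // o ∈ M \ N} ⊕ {b : V // b ∈ N \ M} → Set V := fun x =>
    match x with
    | Sum.inl o => {v | v = o.val ∨ (domBy G M v = {o.val} ∧ v ∉ M ∧ v ∉ N ∧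
        (domBy G N v).card ≠ 1)}
    | Sum.inr b => {v | v = b.val ∨ (domBy G N v = {b.val} ∧ v ∉ M ∧ v ∉ N)} with hg
  set H : SimpleGraph ({o : V // o ∈ M \ N} ⊕ {b : V // b ∈ N \ M}) :=
    SimpleGraph.fromRel (fun x y => ∃ u ∈ g x, ∃ v ∈ g y, G.Adj u v) with hH
  haveI : DecidableRel H.Adj := Classical.decRel _
  obtain ⟨m, T, bags, hT, hcov, hedge, hconn, hw⟩ := htd
  -- the centers belong to their blobs
  have hcl : ∀ o : {o : V // o ∈ M \ N}, o.val ∈ g (Sum.inl o) := fun o => Or.inl rfl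
  have hcr : ∀ b : {b : V // b ∈ N \ M}, b.val ∈ g (Sum.inr b) := fun b => Or.inl rfl
  -- blob membership implications
  have hglM : ∀ (o : {o : V // o ∈ M \ N}) v, v ∈ g (Sum.inl o) → v = o.val ∨ G.Adj o.val v := by
    rintro o v (rfl | ⟨hdom, _, _, _⟩)
    · exact Or.inl rfl
    · have h : o.val ∈ domBy G M v := by rw [hdom]; exact Finset.mem_singleton_self _
      rcases (mem_domBy.1 h).2 with h' | h'
      · exact Or.inl h'.symm
      · exact Or.inr h'
  have hgrN : ∀ (b : {b : V // b ∈ N \ M}) v, v ∈ g (Sum.inr b) → v = b.val ∨ G.Adj b.val v := by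
    rintro b v (rfl | ⟨hdom, _, _⟩)
    · exact Or.inl rfl
    · have h : b.val ∈ domBy G N v := by rw [hdom]; exact Finset.mem_singleton_self _
      rcases (mem_domBy.1 h).2 with h' | h'
      · exact Or.inl h'.symm
      · exact Or.inr h'
  -- apply the minor degree lemma
  have hdeg : ∃ x, H.degree x ≤ w := by
    apply minor_min_degree hT hcov hedge hconn hw H ⟨Sum.inl ⟨hMd.choose, hMd.choose_spec⟩⟩ g
    · -- nonempty
      rintro (o | b)
      · exact ⟨o.val, hcl o⟩
      · exact ⟨b.val, hcr b⟩
    · -- connected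
      rintro (o | b)
      · exact star_induce_connected (hcl o) (hglM o)
      · exact star_induce_connected (hcr b) (hgrN b)
    · -- disjoint
      rintro x y hxy
      rw [Set.disjoint_left]
      intro v hvx hvy
      apply hxy
      match x, y with
      | Sum.inl o₁, Sum.inl o₂ =>
        rcases hvx with rfl | ⟨hd1, hM1, _, _⟩
        · rcases hvy with h | ⟨hd2, hM2, _, _⟩
          · exact congrArg Sum.inl (Subtype.ext h)
          · exact absurd (Finset.mem_sdiff.1 o₁.prop).1 hM2
        · rcases hvy with rfl | ⟨hd2, hM2, _, _⟩
          · exact absurd (Finset.mem_sdiff.1 o₂.prop).1 hM1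
          · have : o₁.val = o₂.val := by
              have h1 : o₁.val ∈ domBy G M v := by rw [hd1]; exact Finset.mem_singleton_self _
              rw [hd2] at h1
              exact Finset.mem_singleton.1 h1
            exact congrArg Sum.inl (Subtype.ext this)
      | Sum.inl o₁, Sum.inr b₂ =>
        exfalso
        rcases hvx with rfl | ⟨hd1, hM1, hN1, hc1⟩
        · rcases hvy with h | ⟨hd2, hM2, _⟩
          · have h1 : o₁.val ∈ M := (Finset.mem_sdiff.1 o₁.prop).1
            have h2 : b₂.val ∉ M := (Finset.mem_sdiff.1 b₂.prop).2
            exact h2 (h ▸ h1)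
          · exact hM2 (Finset.mem_sdiff.1 o₁.prop).1
        · rcases hvy with rfl | ⟨hd2, _, _⟩
          · exact hN1 (Finset.mem_sdiff.1 b₂.prop).1
          · exact hc1 (by rw [hd2]; simp)
      | Sum.inr b₁, Sum.inl o₂ =>
        exfalso
        rcases hvx with rfl | ⟨hd1, hM1, hN1⟩
        · rcases hvy with h | ⟨hd2, _, hN2, _⟩
          · have h1 : b₁.val ∈ N := (Finset.mem_sdiff.1 b₁.prop).1
            have h2 : o₂.val ∉ N := (Finset.mem_sdiff.1 o₂.prop).2
            exact h2 (h ▸ h1)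
          · exact hN2 (Finset.mem_sdiff.1 b₁.prop).1
        · rcases hvy with rfl | ⟨hd2, _, _, hc2⟩
          · exact hM1 (Finset.mem_sdiff.1 o₂.prop).1
          · exact hc2 (by rw [hd1]; simp)
      | Sum.inr b₁, Sum.inr b₂ =>
        rcases hvx with rfl | ⟨hd1, _, hN1⟩
        · rcases hvy with h | ⟨hd2, _, hN2⟩
          · exact congrArg Sum.inr (Subtype.ext h)
          · exact absurd (Finset.mem_sdiff.1 b₁.prop).1 hN2
        · rcases hvy with rfl | ⟨hd2, _, hN2⟩
          · exact absurd (Finset.mem_sdiff.1 b₂.prop).1 hN1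
          · have : b₁.val = b₂.val := by
              have h1 : b₁.val ∈ domBy G N v := by rw [hd1]; exact Finset.mem_singleton_self _
              rw [hd2] at h1
              exact Finset.mem_singleton.1 h1
            exact congrArg Sum.inr (Subtype.ext this)
    · -- adjacency
      intro x y hadj
      rw [hH, SimpleGraph.fromRel_adj] at hadj
      rcases hadj.2 with ⟨u, hu, v, hv, huv⟩ | ⟨u, hu, v, hv, huv⟩
      · exact ⟨u, hu, v, hv, huv⟩
      · exact ⟨v, hv, u, hu, huv.symm⟩
  obtain ⟨x, hx⟩ := hdeg
  -- an H-adjacency helper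
  have hHadj : ∀ (x y : {o : V // o ∈ M \ N} ⊕ {b : V // b ∈ N \ M}),
      x ≠ y → (∃ u ∈ g x, ∃ v ∈ g y, G.Adj u v) → H.Adj x y := by
    intro x y hne hrel
    rw [hH, SimpleGraph.fromRel_adj]
    exact ⟨hne, Or.inl hrel⟩
  match x with
  | Sum.inl o =>
    left
    refine ⟨o.val, (Finset.mem_sdiff.1 o.prop).1, (Finset.mem_sdiff.1 o.prop).2, ?_⟩
    set Y : Finset V := ((H.neighborFinset (Sum.inl o)).image
      (Sum.elim (fun a => a.val) (fun b => b.val))) ∩ (N \ M) with hY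
    have hYsub : Y ⊆ N \ M := Finset.inter_subset_right
    have hYcard : Y.card ≤ w + 1 := by
      calc Y.card ≤ ((H.neighborFinset (Sum.inl o)).image
            (Sum.elim (fun a => a.val) (fun b => b.val))).card :=
            Finset.card_le_card Finset.inter_subset_left
        _ ≤ (H.neighborFinset (Sum.inl o)).card := Finset.card_image_le
        _ = H.degree (Sum.inl o) := rfl
        _ ≤ w := hx
        _ ≤ w + 1 := Nat.le_succ w
    refine ⟨Y, hYsub, hYcard, ?_⟩
    -- Y covers the private neighbors of o
    have hcover : ∀ u, domBy G M u = {o.val} → ∃ y ∈ Y, y = u ∨ G.Adj y u := by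
      intro u hu
      have hodom : o.val = u ∨ G.Adj o.val u := by
        have : o.val ∈ domBy G M u := by rw [hu]; exact Finset.mem_singleton_self _
        exact (mem_domBy.1 this).2
      have huM : u ∈ M → u = o.val := by
        intro huM
        have : u ∈ domBy G M u := mem_domBy.2 ⟨huM, Or.inl rfl⟩
        rw [hu] at this; exact Finset.mem_singleton.1 this
      -- N-dominators of u avoid M
      have hbM : ∀ b' ∈ domBy G N u, b' ∈ N \ M := by
        intro b' hb'
        rw [mem_domBy] at hb'
        refine Finset.mem_sdiff.2 ⟨hb'.1, fun hbM' => ?_⟩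
        have : b' ∈ domBy G M u := mem_domBy.2 ⟨hbM', hb'.2⟩
        rw [hu, Finset.mem_singleton] at this
        exact (Finset.mem_sdiff.1 o.prop).2 (this ▸ hb'.1)
      obtain ⟨b₀, hb₀⟩ := domBy_nonempty hN.1 u
      have hb₀NM : b₀ ∈ N \ M := hbM b₀ hb₀
      have hb₀dom : b₀ = u ∨ G.Adj b₀ u := (mem_domBy.1 hb₀).2
      -- helper to produce elements of Y
      have hmem : ∀ (z : {o : V // o ∈ M \ N} ⊕ {b : V // b ∈ N \ M}),
          H.Adj (Sum.inl o) z → Sum.elim (fun a => a.val) (fun b => b.val) z ∈ N \ M →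
          Sum.elim (fun a => a.val) (fun b => b.val) z ∈ Y := by
        intro z hz hzNM
        rw [hY, Finset.mem_inter]
        exact ⟨Finset.mem_image.2 ⟨z, (SimpleGraph.mem_neighborFinset _ _ _).2 hz, rfl⟩, hzNM⟩
      by_cases huo : u = o.val
      · -- u is o itself
        have hbne : b₀ ≠ u := by
          rintro rfl
          exact (Finset.mem_sdiff.1 hb₀NM).2 (huo ▸ (Finset.mem_sdiff.1 o.prop).1)
        have hadjb : G.Adj b₀ u := hb₀dom.resolve_left hbne
        have hHa : H.Adj (Sum.inl o) (Sum.inr ⟨b₀, hb₀NM⟩) := by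
          apply hHadj _ _ (by simp)
          exact ⟨o.val, hcl o, b₀, hcr ⟨b₀, hb₀NM⟩, by rw [huo] at hadjb; exact hadjb.symm⟩
        exact ⟨b₀, hmem _ hHa hb₀NM, Or.inr hadjb⟩
      · have hunotM : u ∉ M := fun h => huo (huM h)
        have hadjou : G.Adj o.val u := hodom.resolve_left (fun h => huo h.symm)
        by_cases huN : u ∈ N
        · -- u itself is in N \ M
          have huNM : u ∈ N \ M := Finset.mem_sdiff.2 ⟨huN, hunotM⟩
          have hHa : H.Adj (Sum.inl o) (Sum.inr ⟨u, huNM⟩) := by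
            apply hHadj _ _ (by simp)
            exact ⟨o.val, hcl o, u, hcr ⟨u, huNM⟩, hadjou⟩
          exact ⟨u, hmem _ hHa huNM, Or.inl rfl⟩
        · have hbne : b₀ ≠ u := fun h => huN (h ▸ (mem_domBy.1 hb₀).1)
          have hadjb : G.Adj b₀ u := hb₀dom.resolve_left hbne
          by_cases hcard : (domBy G N u).card = 1
          · -- u is N-private to b₀; u sits in the blob of b₀
            have hsing : domBy G N u = {b₀} := by
              obtain ⟨c, hc⟩ := Finset.card_eq_one.1 hcard
              rw [hc] at hb₀ ⊢
              rw [Finset.mem_singleton] at hb₀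
              rw [hb₀]
            have huginr : u ∈ g (Sum.inr ⟨b₀, hb₀NM⟩) := Or.inr ⟨hsing, hunotM, huN⟩
            have hHa : H.Adj (Sum.inl o) (Sum.inr ⟨b₀, hb₀NM⟩) := by
              apply hHadj _ _ (by simp)
              exact ⟨o.val, hcl o, u, huginr, hadjou⟩
            exact ⟨b₀, hmem _ hHa hb₀NM, Or.inr hadjb⟩
          · -- u sits in the blob of o
            have huginl : u ∈ g (Sum.inl o) := Or.inr ⟨hu, hunotM, huN, hcard⟩
            have hHa : H.Adj (Sum.inl o) (Sum.inr ⟨b₀, hb₀NM⟩) := by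
              apply hHadj _ _ (by simp)
              exact ⟨u, huginl, b₀, hcr ⟨b₀, hb₀NM⟩, hadjb.symm⟩
            exact ⟨b₀, hmem _ hHa hb₀NM, Or.inr hadjb⟩
    -- conclude domination
    intro v
    by_cases hall : domBy G M v = {o.val}
    · obtain ⟨y, hyY, hyv⟩ := hcover v hall
      have hyne : y ≠ o.val := by
        intro h
        exact (Finset.mem_sdiff.1 (hYsub hyY)).2 (h ▸ (Finset.mem_sdiff.1 o.prop).1)
      have hymem : y ∈ (M ∪ Y).erase o.val :=
        Finset.mem_erase.2 ⟨hyne, Finset.mem_union_right _ hyY⟩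
      rcases hyv with rfl | hadj
      · exact Or.inl hymem
      · exact Or.inr ⟨y, hymem, hadj⟩
    · have hne' : (domBy G M v).Nonempty := domBy_nonempty hM.1 v
      have : ∃ mm ∈ domBy G M v, mm ≠ o.val := by
        by_contra hcon
        push_neg at hcon
        apply hall
        apply Finset.Subset.antisymm
        · intro z hz; rw [Finset.mem_singleton]; exact hcon z hz
        · intro z hz
          rw [Finset.mem_singleton] at hz
          obtain ⟨mm, hmm⟩ := hne'
          rw [hz, ← hcon mm hmm]
          exact hmm
      obtain ⟨mm, hmm, hmo⟩ := this
      rw [mem_domBy] at hmm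
      have hmmem : mm ∈ (M ∪ Y).erase o.val :=
        Finset.mem_erase.2 ⟨hmo, Finset.mem_union_left _ hmm.1⟩
      rcases hmm.2 with rfl | hadj
      · exact Or.inl hmmem
      · exact Or.inr ⟨mm, hmmem, hadj⟩
  | Sum.inr b =>
    right
    refine ⟨b.val, (Finset.mem_sdiff.1 b.prop).1, (Finset.mem_sdiff.1 b.prop).2, ?_⟩
    set Y : Finset V := ((H.neighborFinset (Sum.inr b)).image
      (Sum.elim (fun a => a.val) (fun b => b.val))) ∩ (M \ N) with hY
    have hYsub : Y ⊆ M \ N := Finset.inter_subset_right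
    have hYcard : Y.card ≤ w + 1 := by
      calc Y.card ≤ ((H.neighborFinset (Sum.inr b)).image
            (Sum.elim (fun a => a.val) (fun b => b.val))).card :=
            Finset.card_le_card Finset.inter_subset_left
        _ ≤ (H.neighborFinset (Sum.inr b)).card := Finset.card_image_le
        _ = H.degree (Sum.inr b) := rfl
        _ ≤ w := hx
        _ ≤ w + 1 := Nat.le_succ w
    refine ⟨Y, hYsub, hYcard, ?_⟩
    have hcover : ∀ u, domBy G N u = {b.val} → ∃ y ∈ Y, y = u ∨ G.Adj y u := by
      intro u hu
      have hbdom : b.val = u ∨ G.Adj b.val u := by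
        have : b.val ∈ domBy G N u := by rw [hu]; exact Finset.mem_singleton_self _
        exact (mem_domBy.1 this).2
      have huN : u ∈ N → u = b.val := by
        intro huN
        have : u ∈ domBy G N u := mem_domBy.2 ⟨huN, Or.inl rfl⟩
        rw [hu] at this; exact Finset.mem_singleton.1 this
      have hmM : ∀ m' ∈ domBy G M u, m' ∈ M \ N := by
        intro m' hm'
        rw [mem_domBy] at hm'
        refine Finset.mem_sdiff.2 ⟨hm'.1, fun hmN' => ?_⟩
        have : m' ∈ domBy G N u := mem_domBy.2 ⟨hmN', hm'.2⟩
        rw [hu, Finset.mem_singleton] at this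
        exact (Finset.mem_sdiff.1 b.prop).2 (this ▸ hm'.1)
      obtain ⟨m₀, hm₀⟩ := domBy_nonempty hM.1 u
      have hm₀MN : m₀ ∈ M \ N := hmM m₀ hm₀
      have hm₀dom : m₀ = u ∨ G.Adj m₀ u := (mem_domBy.1 hm₀).2
      have hmem : ∀ (z : {o : V // o ∈ M \ N} ⊕ {b : V // b ∈ N \ M}),
          H.Adj (Sum.inr b) z → Sum.elim (fun a => a.val) (fun b => b.val) z ∈ M \ N →
          Sum.elim (fun a => a.val) (fun b => b.val) z ∈ Y := by
        intro z hz hzMN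
        rw [hY, Finset.mem_inter]
        exact ⟨Finset.mem_image.2 ⟨z, (SimpleGraph.mem_neighborFinset _ _ _).2 hz, rfl⟩, hzMN⟩
      by_cases hub : u = b.val
      · have hmne : m₀ ≠ u := by
          rintro rfl
          exact (Finset.mem_sdiff.1 hm₀MN).2 (hub ▸ (Finset.mem_sdiff.1 b.prop).1)
        have hadjm : G.Adj m₀ u := hm₀dom.resolve_left hmne
        have hHa : H.Adj (Sum.inr b) (Sum.inl ⟨m₀, hm₀MN⟩) := by
          apply hHadj _ _ (by simp)
          exact ⟨b.val, hcr b, m₀, hcl ⟨m₀, hm₀MN⟩, by rw [hub] at hadjm; exact hadjm.symm⟩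
        exact ⟨m₀, hmem _ hHa hm₀MN, Or.inr hadjm⟩
      · have hunotN : u ∉ N := fun h => hub (huN h)
        have hadjbu : G.Adj b.val u := hbdom.resolve_left (fun h => hub h.symm)
        by_cases huM : u ∈ M
        · have huMN : u ∈ M \ N := Finset.mem_sdiff.2 ⟨huM, hunotN⟩
          have hHa : H.Adj (Sum.inr b) (Sum.inl ⟨u, huMN⟩) := by
            apply hHadj _ _ (by simp)
            exact ⟨b.val, hcr b, u, hcl ⟨u, huMN⟩, hadjbu⟩
          exact ⟨u, hmem _ hHa huMN, Or.inl rfl⟩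
        · have hmne : m₀ ≠ u := fun h => huM (h ▸ (mem_domBy.1 hm₀).1)
          have hadjm : G.Adj m₀ u := hm₀dom.resolve_left hmne
          have huginr : u ∈ g (Sum.inr b) := Or.inr ⟨hu, huM, hunotN⟩
          have hHa : H.Adj (Sum.inr b) (Sum.inl ⟨m₀, hm₀MN⟩) := by
            apply hHadj _ _ (by simp)
            exact ⟨u, huginr, m₀, hcl ⟨m₀, hm₀MN⟩, hadjm.symm⟩
          exact ⟨m₀, hmem _ hHa hm₀MN, Or.inr hadjm⟩
    intro v
    by_cases hall : domBy G N v = {b.val}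
    · obtain ⟨y, hyY, hyv⟩ := hcover v hall
      have hyne : y ≠ b.val := by
        intro h
        exact (Finset.mem_sdiff.1 (hYsub hyY)).2 (h ▸ (Finset.mem_sdiff.1 b.prop).1)
      have hymem : y ∈ (N ∪ Y).erase b.val :=
        Finset.mem_erase.2 ⟨hyne, Finset.mem_union_right _ hyY⟩
      rcases hyv with rfl | hadj
      · exact Or.inl hymem
      · exact Or.inr ⟨y, hymem, hadj⟩
    · have hne' : (domBy G N v).Nonempty := domBy_nonempty hN.1 v
      have : ∃ mm ∈ domBy G N v, mm ≠ b.val := by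
        by_contra hcon
        push_neg at hcon
        apply hall
        apply Finset.Subset.antisymm
        · intro z hz; rw [Finset.mem_singleton]; exact hcon z hz
        · intro z hz
          rw [Finset.mem_singleton] at hz
          obtain ⟨mm, hmm⟩ := hne'
          rw [hz, ← hcon mm hmm]
          exact hmm
      obtain ⟨mm, hmm, hmo⟩ := this
      rw [mem_domBy] at hmm
      have hmmem : mm ∈ (N ∪ Y).erase b.val :=
        Finset.mem_erase.2 ⟨hmo, Finset.mem_union_left _ hmm.1⟩
      rcases hmm.2 with rfl | hadj
      · exact Or.inl hmmem
      · exact Or.inr ⟨mm, hmmem, hadj⟩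

end StepLemma

section Core

open SimpleGraph Finset

variable {V : Type} [Fintype V] [DecidableEq V]

lemma core_walk {G : SimpleGraph V} {w k : ℕ}
    (htd : HasTreeDecompOfWidth G w) (hk : k = gammaU G + w + 1) (σ : ℕ) :
    ∀ (A B : {D : Finset V // IsDomSet G D ∧ D.card ≤ k}),
      Minimal (IsDomSet G) A.val → Minimal (IsDomSet G) B.val →
      (A.val ∪ B.val).card ≤ σ →
      ∃ p : (reconfGraph G k).Walk A B,
        p.length ≤ (2*w+3) * (A.val ∪ B.val).card + A.val.card + B.val.card := by
  induction σ with
  | zero =>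
    intro A B hA hB hcard
    have : A.val ∪ B.val = ∅ := Finset.card_eq_zero.1 (Nat.le_zero.1 hcard)
    have hA0 : A.val = ∅ := Finset.union_eq_empty.1 this |>.1
    have hB0 : B.val = ∅ := Finset.union_eq_empty.1 this |>.2
    have : A = B := Subtype.ext (hA0.trans hB0.symm)
    subst this
    exact ⟨SimpleGraph.Walk.nil, by simp⟩
  | succ σ ih =>
    intro A B hA hB hcard
    by_cases hAB : A = B
    · subst hAB
      exact ⟨SimpleGraph.Walk.nil, by simp⟩
    have hABv : A.val ≠ B.val := fun h => hAB (Subtype.ext h)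
    rcases step_exists htd hA hB hABv with
      ⟨o, hoM, hoN, Y, hYsub, hYcard, hdom⟩ | ⟨o, hoN, hoM, Y, hYsub, hYcard, hdom⟩
    · -- step on the A side
      set M := A.val with hMdef
      set N := B.val with hNdef
      have hMYk : (M ∪ Y).card ≤ k := by
        have h1 : M.card ≤ gammaU G := minimal_card_le_gammaU G hA
        have h2 : (M ∪ Y).card ≤ M.card + Y.card := Finset.card_union_le M Y
        omega
      have hMYdom : IsDomSet G (M ∪ Y) := isDomSet_mono G Finset.subset_union_left hA.1
      set vMY : {D : Finset V // IsDomSet G D ∧ D.card ≤ k} := ⟨M ∪ Y, hMYdom, hMYk⟩ with hvMY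
      have hoMY : o ∈ M ∪ Y := Finset.mem_union_left _ hoM
      have hD2k : ((M ∪ Y).erase o).card ≤ k :=
        le_trans (Finset.card_le_card (Finset.erase_subset _ _)) hMYk
      set vD2 : {D : Finset V // IsDomSet G D ∧ D.card ≤ k} := ⟨(M ∪ Y).erase o, hdom, hD2k⟩ with hvD2
      obtain ⟨M', hM'sub, hM'⟩ := exists_minimal_subset G hdom
      have hM'k : M'.card ≤ k := by
        have := minimal_card_le_gammaU G hM'
        omega
      set vM' : {D : Finset V // IsDomSet G D ∧ D.card ≤ k} := ⟨M', hM'.1, hM'k⟩ with hvM'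
      obtain ⟨p1, hp1⟩ := walk_up A vMY Finset.subset_union_left
      obtain ⟨p2, hp2⟩ := walk_down vMY vD2 (Finset.erase_subset _ _)
      obtain ⟨p3, hp3⟩ := walk_down vD2 vM' hM'sub
      -- recursive call
      have hsub : M' ∪ N ⊆ (M ∪ N).erase o := by
        intro x hx
        rcases Finset.mem_union.1 hx with hx | hx
        · have hx2 := hM'sub hx
          rw [Finset.mem_erase] at hx2 ⊢
          refine ⟨hx2.1, ?_⟩
          rcases Finset.mem_union.1 hx2.2 with h | h
          · exact Finset.mem_union_left _ h
          · exact Finset.mem_union_right _ (Finset.mem_sdiff.1 (hYsub h)).1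
        · exact Finset.mem_erase.2 ⟨fun h => hoN (h ▸ hx), Finset.mem_union_right _ hx⟩
      have hcard' : (M' ∪ N).card ≤ σ := by
        have h1 : (M' ∪ N).card ≤ ((M ∪ N).erase o).card := Finset.card_le_card hsub
        have h2 : ((M ∪ N).erase o).card = (M ∪ N).card - 1 :=
          Finset.card_erase_of_mem (Finset.mem_union_left _ hoM)
        have h3 : 0 < (M ∪ N).card := Finset.card_pos.2 ⟨o, Finset.mem_union_left _ hoM⟩
        omega
      obtain ⟨p4, hp4⟩ := ih vM' B hM' hB hcard'
      have hp1' : p1.length = ((M ∪ Y) \ M).card := hp1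
      have hp2' : p2.length = ((M ∪ Y) \ (M ∪ Y).erase o).card := hp2
      have hp3' : p3.length = ((M ∪ Y).erase o \ M').card := hp3
      have hp4' : p4.length ≤ (2*w+3) * (M' ∪ N).card + M'.card + N.card := hp4
      refine ⟨p1.append (p2.append (p3.append p4)), ?_⟩
      have hlen : (p1.append (p2.append (p3.append p4))).length
          = p1.length + p2.length + p3.length + p4.length := by
        simp [SimpleGraph.Walk.length_append]
        omega
      rw [hlen, hp1', hp2', hp3']
      -- arithmetic
      have e1 : ((M ∪ Y) \ M).card ≤ Y.card := by
        apply Finset.card_le_card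
        intro x hx
        rw [Finset.mem_sdiff] at hx
        rcases Finset.mem_union.1 hx.1 with h | h
        · exact absurd h hx.2
        · exact h
      have e2 : ((M ∪ Y) \ (M ∪ Y).erase o).card ≤ 1 := by
        refine le_trans (Finset.card_le_card ?_) (Finset.card_singleton o).le
        intro x hx
        rw [Finset.mem_sdiff, Finset.mem_erase] at hx
        rw [Finset.mem_singleton]
        by_contra h
        exact hx.2 ⟨h, hx.1⟩
      have e3 : ((M ∪ Y).erase o \ M').card + M'.card = ((M ∪ Y).erase o).card :=
        Finset.card_sdiff_add_card_eq_card hM'sub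
      have e4 : ((M ∪ Y).erase o).card + 1 = (M ∪ Y).card :=
        by rw [Finset.card_erase_of_mem hoMY]; have : 0 < (M ∪ Y).card := Finset.card_pos.2 ⟨o, hoMY⟩; omega
      have e5 : (M ∪ Y).card ≤ M.card + Y.card := Finset.card_union_le M Y
      have e6 : (2*w+3) * (M' ∪ N).card + (2*w+3) ≤ (2*w+3) * (M ∪ N).card := by
        have h1 : (M' ∪ N).card + 1 ≤ (M ∪ N).card := by
          have h2 : ((M ∪ N).erase o).card = (M ∪ N).card - 1 :=
            Finset.card_erase_of_mem (Finset.mem_union_left _ hoM)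
          have h3 : 0 < (M ∪ N).card := Finset.card_pos.2 ⟨o, Finset.mem_union_left _ hoM⟩
          have := Finset.card_le_card hsub
          omega
        calc (2*w+3) * (M' ∪ N).card + (2*w+3) = (2*w+3) * ((M' ∪ N).card + 1) := by ring
          _ ≤ (2*w+3) * (M ∪ N).card := Nat.mul_le_mul_left _ h1
      generalize hP1 : (2*w+3) * (M' ∪ N).card = P1 at hp4' e6
      generalize hP2 : (2*w+3) * (M ∪ N).card = P2 at e6 ⊢
      omega
    · -- step on the B side (mirror)
      set M := A.val with hMdef
      set N := B.val with hNdef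
      have hNYk : (N ∪ Y).card ≤ k := by
        have h1 : N.card ≤ gammaU G := minimal_card_le_gammaU G hB
        have h2 : (N ∪ Y).card ≤ N.card + Y.card := Finset.card_union_le N Y
        omega
      have hNYdom : IsDomSet G (N ∪ Y) := isDomSet_mono G Finset.subset_union_left hB.1
      set vNY : {D : Finset V // IsDomSet G D ∧ D.card ≤ k} := ⟨N ∪ Y, hNYdom, hNYk⟩ with hvNY
      have hoNY : o ∈ N ∪ Y := Finset.mem_union_left _ hoN
      have hD2k : ((N ∪ Y).erase o).card ≤ k :=
        le_trans (Finset.card_le_card (Finset.erase_subset _ _)) hNYk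
      set vD2 : {D : Finset V // IsDomSet G D ∧ D.card ≤ k} := ⟨(N ∪ Y).erase o, hdom, hD2k⟩ with hvD2
      obtain ⟨N', hN'sub, hN'⟩ := exists_minimal_subset G hdom
      have hN'k : N'.card ≤ k := by
        have := minimal_card_le_gammaU G hN'
        omega
      set vN' : {D : Finset V // IsDomSet G D ∧ D.card ≤ k} := ⟨N', hN'.1, hN'k⟩ with hvN'
      obtain ⟨q1, hq1⟩ := walk_up B vNY Finset.subset_union_left
      obtain ⟨q2, hq2⟩ := walk_down vNY vD2 (Finset.erase_subset _ _)
      obtain ⟨q3, hq3⟩ := walk_down vD2 vN' hN'sub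
      have hsub : M ∪ N' ⊆ (M ∪ N).erase o := by
        intro x hx
        rcases Finset.mem_union.1 hx with hx | hx
        · exact Finset.mem_erase.2 ⟨fun h => hoM (h ▸ hx), Finset.mem_union_left _ hx⟩
        · have hx2 := hN'sub hx
          rw [Finset.mem_erase] at hx2 ⊢
          refine ⟨hx2.1, ?_⟩
          rcases Finset.mem_union.1 hx2.2 with h | h
          · exact Finset.mem_union_right _ h
          · exact Finset.mem_union_left _ (Finset.mem_sdiff.1 (hYsub h)).1
      have hcard' : (M ∪ N').card ≤ σ := by
        have h1 : (M ∪ N').card ≤ ((M ∪ N).erase o).card := Finset.card_le_card hsub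
        have h2 : ((M ∪ N).erase o).card = (M ∪ N).card - 1 :=
          Finset.card_erase_of_mem (Finset.mem_union_right _ hoN)
        have h3 : 0 < (M ∪ N).card := Finset.card_pos.2 ⟨o, Finset.mem_union_right _ hoN⟩
        omega
      obtain ⟨p4, hp4⟩ := ih A vN' hA hN' hcard'
      have hq1' : q1.length = ((N ∪ Y) \ N).card := hq1
      have hq2' : q2.length = ((N ∪ Y) \ (N ∪ Y).erase o).card := hq2
      have hq3' : q3.length = ((N ∪ Y).erase o \ N').card := hq3
      have hp4' : p4.length ≤ (2*w+3) * (M ∪ N').card + M.card + N'.card := hp4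
      refine ⟨p4.append (q3.reverse.append (q2.reverse.append q1.reverse)), ?_⟩
      have hlen : (p4.append (q3.reverse.append (q2.reverse.append q1.reverse))).length
          = p4.length + q1.length + q2.length + q3.length := by
        simp [SimpleGraph.Walk.length_append, SimpleGraph.Walk.length_reverse]
        omega
      rw [hlen, hq1', hq2', hq3']
      have e2 : ((N ∪ Y) \ (N ∪ Y).erase o).card ≤ 1 := by
        refine le_trans (Finset.card_le_card ?_) (Finset.card_singleton o).le
        intro x hx
        rw [Finset.mem_sdiff, Finset.mem_erase] at hx
        rw [Finset.mem_singleton]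
        by_contra h
        exact hx.2 ⟨h, hx.1⟩
      have e1 : ((N ∪ Y) \ N).card ≤ Y.card := by
        apply Finset.card_le_card
        intro x hx
        rw [Finset.mem_sdiff] at hx
        rcases Finset.mem_union.1 hx.1 with h | h
        · exact absurd h hx.2
        · exact h
      have e3 : ((N ∪ Y).erase o \ N').card + N'.card = ((N ∪ Y).erase o).card :=
        Finset.card_sdiff_add_card_eq_card hN'sub
      have e4 : ((N ∪ Y).erase o).card + 1 = (N ∪ Y).card :=
        by rw [Finset.card_erase_of_mem hoNY]; have : 0 < (N ∪ Y).card := Finset.card_pos.2 ⟨o, hoNY⟩; omega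
      have e5 : (N ∪ Y).card ≤ N.card + Y.card := Finset.card_union_le N Y
      have e6 : (2*w+3) * (M ∪ N').card + (2*w+3) ≤ (2*w+3) * (M ∪ N).card := by
        have h1 : (M ∪ N').card + 1 ≤ (M ∪ N).card := by
          have h2 : ((M ∪ N).erase o).card = (M ∪ N).card - 1 :=
            Finset.card_erase_of_mem (Finset.mem_union_right _ hoN)
          have h3 : 0 < (M ∪ N).card := Finset.card_pos.2 ⟨o, Finset.mem_union_right _ hoN⟩
          have := Finset.card_le_card hsub
          omega
        calc (2*w+3) * (M ∪ N').card + (2*w+3) = (2*w+3) * ((M ∪ N').card + 1) := by ring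
          _ ≤ (2*w+3) * (M ∪ N).card := Nat.mul_le_mul_left _ h1
      generalize hP1 : (2*w+3) * (M ∪ N').card = P1 at hp4' e6
      generalize hP2 : (2*w+3) * (M ∪ N).card = P2 at e6 ⊢
      omega

end Core

/-- If `k = Γ(G) + tw(G) + 1`, then `R_k(G)` is connected and has diameter at most
`4(n+1)(tw(G)+1)`. -/
theorem stmt6 {V : Type} [Fintype V] [DecidableEq V] (G : SimpleGraph V) (n k : ℕ)
    (hn : Fintype.card V = n) (hk : k = gammaU G + treewidth G + 1) :
    (reconfGraph G k).Connected ∧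
      ∀ A B, (reconfGraph G k).dist A B ≤ 4 * (n + 1) * (treewidth G + 1) := by
  subst hn
  set w := treewidth G with hwdef
  have htd : HasTreeDecompOfWidth G w := hasTreeDecomp_treewidth G
  by_cases hw0 : w = 0
  · -- treewidth 0: the graph has no edges, `univ` is the unique dominating set
    have hnoadj : ∀ u v : V, ¬ G.Adj u v := by
      rw [hw0] at htd
      obtain ⟨m, T, bags, hT, hcov, hedge, hconn, hbag⟩ := htd
      intro u v huv
      obtain ⟨i, hui, hvi⟩ := hedge u v huv
      have : u = v := Finset.card_le_one.1 (by simpa using hbag i) u hui v hvi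
      exact G.loopless.irrefl v (this ▸ huv)
    have huniv : ∀ D : Finset V, IsDomSet G D → D = Finset.univ := by
      intro D hD
      apply Finset.eq_univ_of_forall
      intro v
      rcases hD v with h | ⟨u, _, hadj⟩
      · exact h
      · exact absurd hadj (hnoadj u v)
    have hmin : Minimal (IsDomSet G) Finset.univ :=
      ⟨isDomSet_univ G, fun y hy _ => by rw [huniv y hy]⟩
    have hcard : Fintype.card V ≤ k := by
      have h1 : (Finset.univ : Finset V).card ≤ gammaU G := minimal_card_le_gammaU G hmin
      rw [Finset.card_univ] at h1
      omega
    have hsame : ∀ A B : {D : Finset V // IsDomSet G D ∧ D.card ≤ k}, A = B := by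
      intro A B
      exact Subtype.ext ((huniv _ A.prop.1).trans (huniv _ B.prop.1).symm)
    constructor
    · rw [SimpleGraph.connected_iff]
      refine ⟨fun A B => by rw [hsame A B], ?_⟩
      exact ⟨⟨Finset.univ, isDomSet_univ G, by rwa [Finset.card_univ]⟩⟩
    · intro A B
      rw [hsame A B, SimpleGraph.dist_self]
      exact Nat.zero_le _
  · -- treewidth ≥ 1
    have hw1 : 1 ≤ w := Nat.one_le_iff_ne_zero.2 hw0
    have hΓ : gammaU G ≤ Fintype.card V := gammaU_le_card G
    have key : ∀ A B : {D : Finset V // IsDomSet G D ∧ D.card ≤ k},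
        ∃ p : (reconfGraph G k).Walk A B,
          p.length ≤ 4 * (Fintype.card V + 1) * (w + 1) := by
      intro A B
      obtain ⟨MA, hMAsub, hMA⟩ := exists_minimal_subset G A.prop.1
      obtain ⟨MB, hMBsub, hMB⟩ := exists_minimal_subset G B.prop.1
      have hMAk : MA.card ≤ k := by
        have := minimal_card_le_gammaU G hMA; omega
      have hMBk : MB.card ≤ k := by
        have := minimal_card_le_gammaU G hMB; omega
      set vA : {D : Finset V // IsDomSet G D ∧ D.card ≤ k} := ⟨MA, hMA.1, hMAk⟩ with hvA
      set vB : {D : Finset V // IsDomSet G D ∧ D.card ≤ k} := ⟨MB, hMB.1, hMBk⟩ with hvB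
      obtain ⟨pA, hpA⟩ := walk_down A vA hMAsub
      obtain ⟨pB, hpB⟩ := walk_down B vB hMBsub
      obtain ⟨pC, hpC⟩ := core_walk htd hk ((MA ∪ MB).card) vA vB hMA hMB le_rfl
      have hpA' : pA.length = (A.val \ MA).card := hpA
      have hpB' : pB.length = (B.val \ MB).card := hpB
      have hpC' : pC.length ≤ (2*w+3) * (MA ∪ MB).card + MA.card + MB.card := hpC
      refine ⟨pA.append (pC.append pB.reverse), ?_⟩
      have hlen : (pA.append (pC.append pB.reverse)).length
          = pA.length + pC.length + pB.length := by
        simp [SimpleGraph.Walk.length_append, SimpleGraph.Walk.length_reverse]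
        omega
      rw [hlen]
      -- numeric bookkeeping
      have b1 : pA.length ≤ k - MA.card := by
        rw [hpA']
        have h1 : (A.val \ MA).card = A.val.card - MA.card := Finset.card_sdiff_of_subset hMAsub
        have h2 := A.prop.2
        have h3 := Finset.card_le_card hMAsub
        omega
      have b2 : pB.length ≤ k - MB.card := by
        rw [hpB']
        have h1 : (B.val \ MB).card = B.val.card - MB.card := Finset.card_sdiff_of_subset hMBsub
        have h2 := B.prop.2
        have h3 := Finset.card_le_card hMBsub
        omega
      have hu : (MA ∪ MB).card ≤ Fintype.card V := by
        rw [← Finset.card_univ]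
        exact Finset.card_le_card (Finset.subset_univ _)
      have hC : pC.length ≤ (2*w+3) * Fintype.card V + MA.card + MB.card := by
        refine le_trans hpC' ?_
        have := Nat.mul_le_mul_left (2*w+3) hu
        omega
      -- combine
      have hMAΓ : MA.card ≤ gammaU G := minimal_card_le_gammaU G hMA
      have hMBΓ : MB.card ≤ gammaU G := minimal_card_le_gammaU G hMB
      set nV := Fintype.card V with hnV
      have hexp1 : (2*w+3) * nV = 2*(w*nV) + 3*nV := by ring
      have hexp2 : 4 * (nV + 1) * (w + 1) = 4*(w*nV) + 4*nV + 4*w + 4 := by ring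
      have hwn : nV ≤ w * nV := Nat.le_mul_of_pos_left _ (by omega)
      generalize hT : w * nV = t at hexp1 hexp2 hwn
      rw [hexp2]
      rw [hexp1] at hC
      omega
    constructor
    · rw [SimpleGraph.connected_iff]
      constructor
      · intro A B
        obtain ⟨p, _⟩ := key A B
        exact ⟨p⟩
      · obtain ⟨M, _, hM⟩ := exists_minimal_subset G (isDomSet_univ G)
        refine ⟨⟨M, hM.1, ?_⟩⟩
        have := minimal_card_le_gammaU G hM
        omega
    · intro A B
      obtain ⟨p, hp⟩ := key A B
      exact le_trans (SimpleGraph.dist_le p) hp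
end

section
/- For every integer ℓ ≥ 3, the graph G_{ℓ,ℓ−1} has treewidth exactly ℓ. -/
open Finset SimpleGraph

variable {V : Type*}

namespace TWProof
variable {ι : Type*}


lemma walk_in_set {T : SimpleGraph ι} {S : Set ι} (h : (T.induce S).Connected)
    {a b : ι} (ha : a ∈ S) (hb : b ∈ S) :
    ∃ w : T.Walk a b, ∀ x ∈ w.support, x ∈ S := by
  obtain ⟨w⟩ := h.preconnected ⟨a, ha⟩ ⟨b, hb⟩
  refine ⟨w.map (SimpleGraph.Embedding.induce S).toHom, ?_⟩
  intro x hx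
  erw [SimpleGraph.Walk.support_map, List.mem_map] at hx
  obtain ⟨y, _, rfl⟩ := hx
  exact y.2

variable (T : SimpleGraph ι)

def Side (i j : ι) : Set ι := {x | ∃ w : T.Walk j x, i ∉ w.support}

lemma self_mem_side {i j : ι} (h : i ≠ j) : j ∈ Side T i j :=
  ⟨SimpleGraph.Walk.nil, by simp [h]⟩

lemma side_closed {S : Set ι} (hS : (T.induce S).Connected) {i j y z : ι}
    (hiS : i ∉ S) (hy : y ∈ S) (hyS : y ∈ Side T i j) (hz : z ∈ S) :
    z ∈ Side T i j := by
  obtain ⟨w1, hw1⟩ := hyS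
  obtain ⟨w2, hw2⟩ := walk_in_set hS hy hz
  refine ⟨w1.append w2, ?_⟩
  rw [SimpleGraph.Walk.support_append]
  intro hmem
  rcases List.mem_append.mp hmem with h1 | h2
  · exact hw1 h1
  · exact hiS (hw2 _ (List.mem_of_mem_tail h2))

variable {α : Type*} [Finite ι] [DecidableEq ι]

lemma descent (hT : T.IsTree) (K : Finset α) (F : α → Set ι)
    (hconn : ∀ v ∈ K, (T.induce (F v)).Connected)
    (hpair : ∀ u ∈ K, ∀ v ∈ K, ∃ i, i ∈ F u ∧ i ∈ F v) :
    ∀ (N : ℕ) (i j : ι), T.Adj i j → (Side T i j).ncard ≤ N →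
      (∀ u ∈ K, ∃ x, x ∈ F u ∧ x ∈ Side T i j) →
      ∃ t, ∀ v ∈ K, t ∈ F v := by
  have hpu := (SimpleGraph.isAcyclic_iff_path_unique).mp hT.2
  intro N
  induction N with
  | zero =>
    intro i j hij hcard _
    exfalso
    have h1 : 0 < (Side T i j).ncard :=
      (Set.ncard_pos (Set.toFinite _)).mpr ⟨j, self_mem_side T hij.ne⟩
    omega
  | succ N ih =>
    intro i j hij hcard H
    by_cases hall : ∀ v ∈ K, j ∈ F v
    · exact ⟨j, hall⟩
    push_neg at hall
    obtain ⟨v, hv, hjv⟩ := hall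
    obtain ⟨y, hyF, hySide⟩ := H v hv
    obtain ⟨w0, hw0⟩ := hySide
    have hyj : y ≠ j := fun h => hjv (h ▸ hyF)
    have hip : i ∉ (w0.toPath : T.Walk j y).support :=
      fun h => hw0 (SimpleGraph.Walk.support_toPath_subset w0 h)
    have hnd : (w0.toPath : T.Walk j y).support.Nodup := w0.toPath.2.support_nodup
    -- destructure the path
    obtain ⟨j', hadj, p2, hp2j, hp2i, hij', hy2⟩ :
        ∃ (j' : ι) (_ : T.Adj j j') (p2 : T.Walk j' y),
          j ∉ p2.support ∧ i ∉ p2.support ∧ i ≠ j' ∧ y ∈ Side T j j' := by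
      cases hpe : (w0.toPath : T.Walk j y) with
      | nil => exact absurd rfl hyj.symm
      | cons hadj p2 =>
        rw [hpe] at hip hnd
        simp only [SimpleGraph.Walk.support_cons, List.nodup_cons] at hnd
        have hjp2 : j ∉ p2.support := hnd.1
        have hip2 : i ∉ p2.support := fun h => hip (by simp [h])
        have hij' : i ≠ _ := fun h => hip2 (h ▸ p2.start_mem_support)
        exact ⟨_, hadj, p2, hjp2, hip2, hij', ⟨p2, hjp2⟩⟩
    -- i is not on the j'-side of edge (j,j')
    have hiSide : i ∉ Side T j j' := by
      rintro ⟨wi, hwi⟩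
      have hP1 : j ∉ (wi.reverse.toPath : T.Walk i j').support := fun h => by
        have := SimpleGraph.Walk.support_toPath_subset wi.reverse h
        rw [SimpleGraph.Walk.support_reverse, List.mem_reverse] at this
        exact hwi this
      have hP2 : (SimpleGraph.Walk.cons hij (SimpleGraph.Walk.cons hadj
          SimpleGraph.Walk.nil) : T.Walk i j').IsPath := by
        simp [SimpleGraph.Walk.isPath_def, hij.ne, hij', hadj.ne]
      have := hpu wi.reverse.toPath ⟨_, hP2⟩
      apply hP1
      rw [this]
      simp
    -- the new side is strictly inside the old one
    have hsub : Side T j j' ⊆ Side T i j := by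
      rintro x ⟨w2, hw2⟩
      have hiw2 : i ∉ w2.support := by
        intro h
        exact hiSide ⟨w2.takeUntil i h, fun hc =>
          hw2 (SimpleGraph.Walk.support_takeUntil_subset _ _ hc)⟩
      refine ⟨SimpleGraph.Walk.cons hadj w2, ?_⟩
      rw [SimpleGraph.Walk.support_cons]
      intro hmem
      rcases List.mem_cons.mp hmem with h | h
      · exact hij.ne h
      · exact hiw2 h
    have hjold : j ∈ Side T i j := self_mem_side T hij.ne
    have hjnew : j ∉ Side T j j' := by
      rintro ⟨w3, hw3⟩
      exact hw3 w3.end_mem_support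
    have hss : Side T j j' ⊂ Side T i j := ⟨hsub, fun hc => hjnew (hc hjold)⟩
    have hlt : (Side T j j').ncard < (Side T i j).ncard :=
      Set.ncard_lt_ncard hss (Set.toFinite _)
    refine ih j j' hadj (by omega) ?_
    intro u hu
    obtain ⟨z, hzu, hzv⟩ := hpair u hu v hv
    exact ⟨z, hzu, side_closed T (hconn v hv) hjv hyF hy2 hzv⟩

lemma helly [Finite ι] [DecidableEq ι] (hT : T.IsTree) {α : Type*} (K : Finset α)
    (F : α → Set ι)
    (hconn : ∀ v ∈ K, (T.induce (F v)).Connected)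
    (hpair : ∀ u ∈ K, ∀ v ∈ K, ∃ i, i ∈ F u ∧ i ∈ F v) :
    ∃ t, ∀ v ∈ K, t ∈ F v := by
  rcases K.eq_empty_or_nonempty with rfl | ⟨v0, hv0⟩
  · have : Nonempty ι := hT.isConnected.nonempty
    exact ⟨Classical.arbitrary ι, by simp⟩
  obtain ⟨i0, hi0, -⟩ := hpair v0 hv0 v0 hv0
  by_cases hall : ∀ v ∈ K, i0 ∈ F v
  · exact ⟨i0, hall⟩
  push_neg at hall
  obtain ⟨v, hv, hiv⟩ := hall
  obtain ⟨y, hy, -⟩ := hpair v hv v hv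
  have hyi0 : y ≠ i0 := fun h => hiv (h ▸ hy)
  obtain ⟨w0⟩ := hT.isConnected.preconnected i0 y
  have hnd : (w0.toPath : T.Walk i0 y).support.Nodup := w0.toPath.2.support_nodup
  obtain ⟨j0, hadj, hySide⟩ :
      ∃ (j0 : ι) (_ : T.Adj i0 j0), y ∈ Side T i0 j0 := by
    cases hpe : (w0.toPath : T.Walk i0 y) with
    | nil => exact absurd rfl hyi0.symm
    | cons hadj p2 =>
      rw [hpe] at hnd
      simp only [SimpleGraph.Walk.support_cons, List.nodup_cons] at hnd
      exact ⟨_, hadj, ⟨p2, hnd.1⟩⟩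
  refine descent T hT K F hconn hpair (Side T i0 j0).ncard i0 j0 hadj le_rfl ?_
  intro u hu
  obtain ⟨z, hzu, hzv⟩ := hpair u hu v hv
  exact ⟨z, hzu, side_closed T (hconn v hv) hiv hy hySide hzv⟩

/-- graph given by a parent function -/
def parentGraph (parent : ι → ι) : SimpleGraph ι where
  Adj x y := x ≠ y ∧ (parent x = y ∨ parent y = x)
  symm := ⟨fun x y ⟨h1, h2⟩ => ⟨h1.symm, h2.symm⟩⟩
  loopless := ⟨fun x ⟨h, _⟩ => h rfl⟩

lemma parentGraph_adj (parent : ι → ι) {x y : ι} :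
    (parentGraph parent).Adj x y ↔ x ≠ y ∧ (parent x = y ∨ parent y = x) := Iff.rfl

variable {parent : ι → ι} {h : ι → ℕ} {r : ι}

lemma parent_ne (hdec : ∀ x, x ≠ r → h (parent x) < h x) {x : ι} (hx : x ≠ r) :
    parent x ≠ x := fun hc => by have := hdec x hx; rw [hc] at this; omega

lemma adj_parent (hdec : ∀ x, x ≠ r → h (parent x) < h x) {x : ι} (hx : x ≠ r) :
    (parentGraph parent).Adj x (parent x) :=
  ⟨(parent_ne hdec hx).symm, Or.inl rfl⟩

lemma parentGraph_connected (hdec : ∀ x, x ≠ r → h (parent x) < h x) :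
    (parentGraph parent).Connected := by
  have key : ∀ (n : ℕ) (x : ι), h x ≤ n → (parentGraph parent).Reachable x r := by
    intro n
    induction n with
    | zero =>
      intro x hx
      by_cases hxr : x = r
      · exact hxr ▸ SimpleGraph.Reachable.refl x
      · exact absurd (hdec x hxr) (by omega)
    | succ n ih =>
      intro x hx
      by_cases hxr : x = r
      · exact hxr ▸ SimpleGraph.Reachable.refl x
      · exact ((adj_parent hdec hxr).reachable).trans (ih _ (by have := hdec x hxr; omega))
  rw [SimpleGraph.connected_iff]
  exact ⟨fun a b => (key _ a le_rfl).trans (key _ b le_rfl).symm, ⟨r⟩⟩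

lemma parent_eq_of_adj (hdec : ∀ x, x ≠ r → h (parent x) < h x) (hr : parent r = r)
    {x y : ι} (hadj : (parentGraph parent).Adj x y) (hy : h y ≤ h x) :
    parent x = y ∧ x ≠ r := by
  obtain ⟨hne, hor | hor⟩ := hadj
  · exact ⟨hor, fun hc => hne (by subst hc; rw [← hor]; exact hr.symm)⟩
  · exfalso
    have hyr : y ≠ r := fun hc => hne (by subst hc; rw [← hor]; exact hr)
    have h3 := hdec y hyr
    rw [hor] at h3
    omega

/-- max-vertex argument: no cycle at a vertex of maximal height -/
lemma no_cycle_at_max (hdec : ∀ x, x ≠ r → h (parent x) < h x) (hr : parent r = r)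
    {x : ι} (c2 : (parentGraph parent).Walk x x) (hc2 : c2.IsCycle)
    (hmax : ∀ w ∈ c2.support, h w ≤ h x) : False := by
  cases c2 with
  | nil => exact hc2.ne_nil rfl
  | @cons _ y _ hadj q =>
    have hy : h y ≤ h x := hmax y (by
      rw [SimpleGraph.Walk.support_cons]
      exact List.mem_cons_of_mem _ q.start_mem_support)
    have hpy : parent x = y := (parent_eq_of_adj hdec hr hadj hy).1
    -- decompose as concat
    obtain ⟨z, q', h2, heq⟩ := SimpleGraph.Walk.exists_cons_eq_concat hadj q
    have hzsup : z ∈ (SimpleGraph.Walk.cons hadj q).support := by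
      rw [heq, SimpleGraph.Walk.support_concat]
      exact List.mem_append_left _ q'.end_mem_support
    have hz : h z ≤ h x := hmax z hzsup
    have hpz : parent x = z := (parent_eq_of_adj hdec hr h2.symm hz).1
    -- duplicate edge
    have hlen : 3 ≤ (SimpleGraph.Walk.cons hadj q).length := hc2.three_le_length
    have hqlen : 2 ≤ q.length := by
      rw [SimpleGraph.Walk.length_cons] at hlen; omega
    have hqne : q.edges ≠ [] := by
      intro hc
      have hl := SimpleGraph.Walk.length_edges q
      rw [hc] at hl
      simp at hl
      omega
    have hEq : s(x, y) :: q.edges = q'.edges ++ [s(z, x)] := by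
      rw [← SimpleGraph.Walk.edges_cons hadj, heq, SimpleGraph.Walk.edges_concat,
        List.concat_eq_append]
    have hq'ne : q'.edges ≠ [] := by
      intro hc
      rw [hc, List.nil_append] at hEq
      simp only [List.cons_eq_cons] at hEq
      exact hqne hEq.2
    obtain ⟨e0, t', ht'⟩ := List.exists_cons_of_ne_nil hq'ne
    rw [ht', List.cons_append] at hEq
    obtain ⟨-, h2'⟩ := List.cons_eq_cons.mp hEq
    have hlast : s(z, x) ∈ q.edges := by
      rw [h2']
      exact List.mem_append_right _ (by simp)
    have hdup : s(x, y) ∈ q.edges := by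
      have hzz : s(z, x) = s(x, y) := by rw [← hpy, ← hpz]; exact Sym2.eq_swap
      rwa [hzz] at hlast
    have hnodup := hc2.isTrail.edges_nodup
    rw [SimpleGraph.Walk.edges_cons, List.nodup_cons] at hnodup
    exact hnodup.1 hdup

lemma parentGraph_acyclic (hdec : ∀ x, x ≠ r → h (parent x) < h x) (hr : parent r = r) :
    (parentGraph parent).IsAcyclic := by
  classical
  intro v c hc
  obtain ⟨x, hxmem, hxmax⟩ := Finset.exists_max_image c.support.toFinset h
    ⟨v, List.mem_toFinset.mpr c.start_mem_support⟩
  replace hxmem := List.mem_toFinset.mp hxmem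
  apply no_cycle_at_max hdec hr (c.rotate x hxmem) (hc.rotate hxmem)
  intro w hw
  rw [SimpleGraph.Walk.support_eq_cons] at hw
  rcases List.mem_cons.mp hw with rfl | hw
  · exact le_rfl
  · refine hxmax w (List.mem_toFinset.mpr ?_)
    have hperm := SimpleGraph.Walk.support_rotate c x hxmem
    exact List.mem_of_mem_tail (hperm.mem_iff.mp hw)

lemma parentGraph_isTree (hdec : ∀ x, x ≠ r → h (parent x) < h x) (hr : parent r = r) :
    (parentGraph parent).IsTree :=
  ⟨parentGraph_connected hdec, parentGraph_acyclic hdec hr⟩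

/-- induced connectivity from a descent function -/
lemma induce_connected_of_descent (T : SimpleGraph ι) (S : Set ι) (r' : ι) (hr' : r' ∈ S)
    (h' : ι → ℕ)
    (step : ∀ x ∈ S, x ≠ r' → ∃ y ∈ S, T.Adj x y ∧ h' y < h' x) :
    (T.induce S).Connected := by
  have key : ∀ (n : ℕ) (x : ι) (hx : x ∈ S), h' x ≤ n →
      (T.induce S).Reachable ⟨x, hx⟩ ⟨r', hr'⟩ := by
    intro n
    induction n with
    | zero =>
      intro x hx hn
      by_cases hxr : x = r'
      · subst hxr; rfl
      · obtain ⟨y, _, _, hlt⟩ := step x hx hxr; omega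
    | succ n ih =>
      intro x hx hn
      by_cases hxr : x = r'
      · subst hxr; rfl
      · obtain ⟨y, hyS, hadj, hlt⟩ := step x hx hxr
        have : (T.induce S).Adj ⟨x, hx⟩ ⟨y, hyS⟩ := by simpa using hadj
        exact this.reachable.trans (ih y hyS (by omega))
  rw [SimpleGraph.connected_iff]
  exact ⟨fun a b => (key _ a a.2 le_rfl).trans (key _ b b.2 le_rfl).symm, ⟨⟨r', hr'⟩⟩⟩


variable (ℓ : ℕ)

def twm : ℕ := (ℓ-1)*ℓ + 1

def twroot : Fin (twm ℓ) := ⟨(ℓ-1)*ℓ, by simp [twm]⟩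

def twpar (x : Fin (twm ℓ)) : Fin (twm ℓ) :=
  if hx : x.val < (ℓ-1)*ℓ then
    (if x.val % ℓ = 0 then twroot ℓ else ⟨x.val - 1, by simp [twm]; omega⟩)
  else twroot ℓ

def twht (x : Fin (twm ℓ)) : ℕ := if x.val < (ℓ-1)*ℓ then x.val % ℓ + 1 else 0

variable {ℓ}

lemma ne_root_iff {x : Fin (twm ℓ)} : x ≠ twroot ℓ ↔ x.val < (ℓ-1)*ℓ := by
  have h1 : x.val < (ℓ-1)*ℓ + 1 := x.isLt
  rw [Ne, Fin.ext_iff]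
  have hval : (twroot ℓ).val = (ℓ-1)*ℓ := rfl
  rw [hval]
  omega

lemma mod_div_pred {a : ℕ} (hℓ0 : 0 < ℓ) (h : a % ℓ ≠ 0) :
    (a-1) % ℓ = a % ℓ - 1 ∧ (a-1)/ℓ = a/ℓ := by
  obtain ⟨q, r, hr, rfl⟩ : ∃ q r, r < ℓ ∧ a = ℓ*q + r :=
    ⟨a/ℓ, a%ℓ, Nat.mod_lt _ hℓ0, (Nat.div_add_mod a ℓ).symm⟩
  have hmod : (ℓ*q + r) % ℓ = r := by rw [Nat.mul_add_mod, Nat.mod_eq_of_lt hr]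
  have hdiv : (ℓ*q + r) / ℓ = q := by
    rw [Nat.mul_add_div hℓ0, Nat.div_eq_of_lt hr, Nat.add_zero]
  have hr1 : r ≠ 0 := by rwa [hmod] at h
  have hsub : ℓ*q + r - 1 = ℓ*q + (r-1) := by omega
  rw [hsub]
  have hmod2 : (ℓ*q + (r-1)) % ℓ = r - 1 := by
    rw [Nat.mul_add_mod, Nat.mod_eq_of_lt (by omega)]
  have hdiv2 : (ℓ*q + (r-1)) / ℓ = q := by
    rw [Nat.mul_add_div hℓ0, Nat.div_eq_of_lt (by omega), Nat.add_zero]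
  exact ⟨by rw [hmod2, hmod], by rw [hdiv2, hdiv]⟩

lemma hdec_tw : ∀ x : Fin (twm ℓ), x ≠ twroot ℓ → twht ℓ (twpar ℓ x) < twht ℓ x := by
  intro x hx
  rw [ne_root_iff] at hx
  have hℓ0 : 0 < ℓ := by by_contra h; simp [Nat.le_zero.mp (not_lt.mp h)] at hx
  rw [twpar, dif_pos hx]
  by_cases h0 : x.val % ℓ = 0
  · rw [if_pos h0]
    simp [twht, twroot, hx]
  · rw [if_neg h0]
    have hsub : x.val - 1 < (ℓ-1)*ℓ := by omega
    obtain ⟨hm, _⟩ := mod_div_pred hℓ0 h0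
    simp only [twht, if_pos hx, if_pos hsub, hm]
    omega

lemma hr_tw : twpar ℓ (twroot ℓ) = twroot ℓ := by
  rw [twpar, dif_neg]
  simp [twroot]

lemma twpar_of_mod_ne {x : Fin (twm ℓ)} (hx : x.val < (ℓ-1)*ℓ) (h0 : x.val % ℓ ≠ 0) :
    (twpar ℓ x).val = x.val - 1 := by
  rw [twpar, dif_pos hx, if_neg h0]

lemma twpar_of_mod_eq {x : Fin (twm ℓ)} (hx : x.val < (ℓ-1)*ℓ) (h0 : x.val % ℓ = 0) :
    twpar ℓ x = twroot ℓ := by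
  rw [twpar, dif_pos hx, if_pos h0]

lemma div_lt_of_lt {x : ℕ} (hℓ0 : 0 < ℓ) (hx : x < (ℓ-1)*ℓ) : x / ℓ < ℓ - 1 :=
  (Nat.div_lt_iff_lt_mul hℓ0).mpr hx

def twnode (b k : ℕ) (hb : b < ℓ - 1) (hk : k < ℓ) : Fin (twm ℓ) :=
  ⟨b * ℓ + k, by
    have h2 : (b+1) * ℓ ≤ (ℓ-1) * ℓ := Nat.mul_le_mul_right _ (by omega)
    have h3 : b * ℓ + k < (b+1) * ℓ := by
      have : (b+1) * ℓ = b * ℓ + ℓ := by ring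
      omega
    simp only [twm]
    omega⟩

lemma twnode_val (b k : ℕ) (hb : b < ℓ - 1) (hk : k < ℓ) :
    (twnode b k hb hk).val = b * ℓ + k := rfl

lemma twnode_div (b k : ℕ) (hb : b < ℓ - 1) (hk : k < ℓ) :
    (twnode b k hb hk).val / ℓ = b := by
  have hℓ0 : 0 < ℓ := by omega
  rw [twnode_val, mul_comm, Nat.mul_add_div hℓ0, Nat.div_eq_of_lt hk, Nat.add_zero]

lemma twnode_mod (b k : ℕ) (hb : b < ℓ - 1) (hk : k < ℓ) :
    (twnode b k hb hk).val % ℓ = k := by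
  rw [twnode_val, mul_comm, Nat.mul_add_mod, Nat.mod_eq_of_lt hk]

lemma twnode_lt (b k : ℕ) (hb : b < ℓ - 1) (hk : k < ℓ) :
    (twnode b k hb hk).val < (ℓ-1)*ℓ := by
  have := (twnode b k hb hk).isLt
  have hne : twnode b k hb hk ≠ twroot ℓ ∨ True := Or.inr trivial
  rcases Nat.lt_or_ge (twnode b k hb hk).val ((ℓ-1)*ℓ) with h | h
  · exact h
  · exfalso
    have hv : (twnode b k hb hk).val = (ℓ-1)*ℓ := by
      have := (twnode b k hb hk).isLt; simp only [twm] at this; omega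
    have := twnode_div b k hb hk
    rw [hv] at this
    have hℓ0 : 0 < ℓ := by omega
    rw [Nat.mul_div_cancel _ hℓ0] at this
    omega

variable (ℓ) in
def bagT (hℓ0 : 0 < ℓ) (x : Fin (twm ℓ)) : Finset (Option (Fin ℓ × Fin ℓ)) :=
  if hx : x.val < (ℓ-1)*ℓ then
    (Finset.Iic (⟨x.val % ℓ, Nat.mod_lt _ hℓ0⟩ : Fin ℓ)).image
        (fun j => some (⟨x.val / ℓ + 1, by
          have := div_lt_of_lt hℓ0 hx; omega⟩, j))
    ∪ (Finset.Ici (⟨x.val % ℓ, Nat.mod_lt _ hℓ0⟩ : Fin ℓ)).image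
        (fun j => some (⟨0, hℓ0⟩, j))
  else insert none (Finset.univ.image fun j : Fin ℓ => some (⟨0, hℓ0⟩, j))

lemma mem_bagT_root {hℓ0 : 0 < ℓ} {x : Fin (twm ℓ)} (hx : ¬ x.val < (ℓ-1)*ℓ)
    {v : Option (Fin ℓ × Fin ℓ)} :
    v ∈ bagT ℓ hℓ0 x ↔ v = none ∨ ∃ a j, v = some (a, j) ∧ a.val = 0 := by
  rw [bagT, dif_neg hx]
  simp only [Finset.mem_insert, Finset.mem_image, Finset.mem_univ, true_and]
  constructor
  · rintro (rfl | ⟨j, rfl⟩)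
    · exact Or.inl rfl
    · exact Or.inr ⟨_, j, rfl, rfl⟩
  · rintro (rfl | ⟨a, j, rfl, ha⟩)
    · exact Or.inl rfl
    · exact Or.inr ⟨j, by congr 3; exact ha.symm⟩

lemma mem_bagT_branch {hℓ0 : 0 < ℓ} {x : Fin (twm ℓ)} (hx : x.val < (ℓ-1)*ℓ)
    {v : Option (Fin ℓ × Fin ℓ)} :
    v ∈ bagT ℓ hℓ0 x ↔ ∃ a j, v = some (a, j) ∧
      ((a.val = x.val / ℓ + 1 ∧ j.val ≤ x.val % ℓ) ∨ (a.val = 0 ∧ x.val % ℓ ≤ j.val)) := by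
  rw [bagT, dif_pos hx]
  simp only [Finset.mem_union, Finset.mem_image, Finset.mem_Iic, Finset.mem_Ici, Fin.le_def]
  constructor
  · rintro (⟨j, hj, rfl⟩ | ⟨j, hj, rfl⟩)
    · exact ⟨_, j, rfl, Or.inl ⟨rfl, hj⟩⟩
    · exact ⟨_, j, rfl, Or.inr ⟨rfl, hj⟩⟩
  · rintro ⟨a, j, rfl, ⟨ha, hj⟩ | ⟨ha, hj⟩⟩
    · exact Or.inl ⟨j, hj, by congr 3; exact ha.symm⟩
    · exact Or.inr ⟨j, hj, by congr 3; exact ha.symm⟩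

lemma card_bagT (hℓ0 : 0 < ℓ) (x : Fin (twm ℓ)) : (bagT ℓ hℓ0 x).card ≤ ℓ + 1 := by
  rw [bagT]
  split_ifs with hx
  · refine le_trans (Finset.card_union_le _ _) ?_
    have h1 := Finset.card_image_le (s := Finset.Iic (⟨x.val % ℓ, Nat.mod_lt _ hℓ0⟩ : Fin ℓ))
      (f := fun j => (some (⟨x.val / ℓ + 1, by have := div_lt_of_lt hℓ0 hx; omega⟩, j) :
        Option (Fin ℓ × Fin ℓ)))
    have h2 := Finset.card_image_le (s := Finset.Ici (⟨x.val % ℓ, Nat.mod_lt _ hℓ0⟩ : Fin ℓ))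
      (f := fun j => (some (⟨0, hℓ0⟩, j) : Option (Fin ℓ × Fin ℓ)))
    rw [Fin.card_Iic] at h1
    rw [Fin.card_Ici] at h2
    have hm : x.val % ℓ < ℓ := Nat.mod_lt _ hℓ0
    simp only at h1 h2
    omega
  · refine le_trans (Finset.card_insert_le _ _) ?_
    have := Finset.card_image_le (s := (Finset.univ : Finset (Fin ℓ)))
      (f := fun j => (some (⟨0, hℓ0⟩, j) : Option (Fin ℓ × Fin ℓ)))
    simp only [Finset.card_univ, Fintype.card_fin] at this
    omega


lemma root_not_lt (ℓ : ℕ) : ¬ (twroot ℓ).val < (ℓ-1)*ℓ := by simp [twroot]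

lemma vert_cover (hℓ0 : 0 < ℓ) (v : Option (Fin ℓ × Fin ℓ)) :
    ∃ i, v ∈ bagT ℓ hℓ0 i := by
  match v with
  | none => exact ⟨twroot ℓ, (mem_bagT_root (root_not_lt ℓ)).mpr (Or.inl rfl)⟩
  | some (a, j) =>
    by_cases ha : a.val = 0
    · exact ⟨twroot ℓ, (mem_bagT_root (root_not_lt ℓ)).mpr (Or.inr ⟨a, j, rfl, ha⟩)⟩
    · have hb : a.val - 1 < ℓ - 1 := by have := a.isLt; omega
      refine ⟨twnode (a.val - 1) j.val hb j.isLt,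
        (mem_bagT_branch (twnode_lt _ _ _ _)).mpr ⟨a, j, rfl, Or.inl ⟨?_, ?_⟩⟩⟩
      · rw [twnode_div]; omega
      · rw [twnode_mod]

lemma cover_pair (hℓ0 : 0 < ℓ) {a b : Fin ℓ} {j k : Fin ℓ}
    (hcase : (a = b ∧ j ≠ k) ∨ (j = k ∧ b.val = 0)) :
    ∃ i, some (a, j) ∈ bagT ℓ hℓ0 i ∧ some (b, k) ∈ bagT ℓ hℓ0 i := by
  rcases hcase with ⟨rfl, hjk⟩ | ⟨rfl, hb0⟩
  · -- same clique
    by_cases ha : a.val = 0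
    · exact ⟨twroot ℓ, (mem_bagT_root (root_not_lt ℓ)).mpr (Or.inr ⟨a, j, rfl, ha⟩),
        (mem_bagT_root (root_not_lt ℓ)).mpr (Or.inr ⟨a, k, rfl, ha⟩)⟩
    · have hb : a.val - 1 < ℓ - 1 := by have := a.isLt; omega
      have hk1 : ℓ - 1 < ℓ := by omega
      refine ⟨twnode (a.val - 1) (ℓ-1) hb hk1, ?_, ?_⟩
      · refine (mem_bagT_branch (twnode_lt _ _ _ _)).mpr ⟨a, j, rfl, Or.inl ⟨?_, ?_⟩⟩
        · rw [twnode_div]; omega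
        · rw [twnode_mod]; have := j.isLt; omega
      · refine (mem_bagT_branch (twnode_lt _ _ _ _)).mpr ⟨a, k, rfl, Or.inl ⟨?_, ?_⟩⟩
        · rw [twnode_div]; omega
        · rw [twnode_mod]; have := k.isLt; omega
  · -- matching edge to outer clique
    by_cases ha : a.val = 0
    · exact ⟨twroot ℓ, (mem_bagT_root (root_not_lt ℓ)).mpr (Or.inr ⟨a, j, rfl, ha⟩),
        (mem_bagT_root (root_not_lt ℓ)).mpr (Or.inr ⟨b, j, rfl, hb0⟩)⟩
    · have hb : a.val - 1 < ℓ - 1 := by have := a.isLt; omega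
      refine ⟨twnode (a.val - 1) j.val hb j.isLt, ?_, ?_⟩
      · refine (mem_bagT_branch (twnode_lt _ _ _ _)).mpr ⟨a, j, rfl, Or.inl ⟨?_, ?_⟩⟩
        · rw [twnode_div]; omega
        · rw [twnode_mod]
      · refine (mem_bagT_branch (twnode_lt _ _ _ _)).mpr ⟨b, j, rfl, Or.inr ⟨hb0, ?_⟩⟩
        rw [twnode_mod]

lemma edge_cover (hℓ0 : 0 < ℓ) {u v : Option (Fin ℓ × Fin ℓ)} (h : (Gll ℓ).Adj u v) :
    ∃ i, u ∈ bagT ℓ hℓ0 i ∧ v ∈ bagT ℓ hℓ0 i := by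
  rw [Gll, SimpleGraph.fromRel_adj] at h
  obtain ⟨hne, hrel⟩ := h
  match u, v with
  | none, none => simp at hrel
  | none, some (b, k) =>
    refine ⟨twroot ℓ, (mem_bagT_root (root_not_lt ℓ)).mpr (Or.inl rfl),
      (mem_bagT_root (root_not_lt ℓ)).mpr (Or.inr ⟨b, k, rfl, ?_⟩)⟩
    simpa using hrel
  | some (b, k), none =>
    refine ⟨twroot ℓ, (mem_bagT_root (root_not_lt ℓ)).mpr (Or.inr ⟨b, k, rfl, ?_⟩),
      (mem_bagT_root (root_not_lt ℓ)).mpr (Or.inl rfl)⟩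
    simpa using hrel
  | some (a, j), some (b, k) =>
    simp only at hrel
    rcases hrel with h1 | h2
    · exact cover_pair hℓ0 h1
    · obtain ⟨i, hi1, hi2⟩ := cover_pair hℓ0 h2
      exact ⟨i, hi2, hi1⟩


lemma bag_conn (hℓ0 : 0 < ℓ) (v : Option (Fin ℓ × Fin ℓ)) :
    ((parentGraph (twpar ℓ)).induce {i | v ∈ bagT ℓ hℓ0 i}).Connected := by
  match v with
  | none =>
    refine induce_connected_of_descent _ _ (twroot ℓ) ?_ (twht ℓ) ?_
    · exact (mem_bagT_root (root_not_lt ℓ)).mpr (Or.inl rfl)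
    · intro x hx hxr
      exfalso
      have hxlt : x.val < (ℓ-1)*ℓ := ne_root_iff.mp hxr
      obtain ⟨a, j, hc, -⟩ := (mem_bagT_branch hxlt).mp hx
      exact nomatch hc
  | some (a, j) =>
    by_cases ha : a.val = 0
    · -- outer clique vertex: root plus low parts of all branches
      refine induce_connected_of_descent _ _ (twroot ℓ) ?_ (twht ℓ) ?_
      · exact (mem_bagT_root (root_not_lt ℓ)).mpr (Or.inr ⟨a, j, rfl, ha⟩)
      · intro x hx hxr
        have hxlt : x.val < (ℓ-1)*ℓ := ne_root_iff.mp hxr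
        obtain ⟨a', j', hc, hcond⟩ := (mem_bagT_branch hxlt).mp hx
        rw [Option.some.injEq, Prod.mk.injEq] at hc
        obtain ⟨rfl, rfl⟩ := hc
        refine ⟨twpar ℓ x, ?_, adj_parent hdec_tw hxr, hdec_tw x hxr⟩
        rcases hcond with ⟨h1, -⟩ | ⟨-, h2⟩
        · exfalso
          rw [ha] at h1
          exact Nat.noConfusion h1
        by_cases h0 : x.val % ℓ = 0
        · rw [twpar_of_mod_eq hxlt h0]
          exact (mem_bagT_root (root_not_lt ℓ)).mpr (Or.inr ⟨a, j, rfl, ha⟩)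
        · have hpv : (twpar ℓ x).val = x.val - 1 := twpar_of_mod_ne hxlt h0
          have hplt : (twpar ℓ x).val < (ℓ-1)*ℓ := by omega
          obtain ⟨hm, hd⟩ := mod_div_pred hℓ0 h0
          refine (mem_bagT_branch hplt).mpr ⟨a, j, rfl, Or.inr ⟨ha, ?_⟩⟩
          rw [hpv, hm]
          omega
    · -- inner clique vertex: upper part of one branch
      have hblt : a.val - 1 < ℓ - 1 := by have := a.isLt; omega
      refine induce_connected_of_descent _ _ (twnode (a.val - 1) j.val hblt j.isLt) ?_
        (twht ℓ) ?_
      · refine (mem_bagT_branch (twnode_lt _ _ _ _)).mpr ⟨a, j, rfl, Or.inl ⟨?_, ?_⟩⟩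
        · rw [twnode_div]; omega
        · rw [twnode_mod]
      · intro x hx hxr
        have hxlt : x.val < (ℓ-1)*ℓ := by
          rcases Nat.lt_or_ge x.val ((ℓ-1)*ℓ) with h1 | h1
          · exact h1
          · exfalso
            obtain (hc | ⟨a', j', hc, ha'⟩) := (mem_bagT_root (by omega)).mp hx
            · exact nomatch hc
            · rw [Option.some.injEq, Prod.mk.injEq] at hc
              obtain ⟨rfl, rfl⟩ := hc
              exact ha ha'
        obtain ⟨a', j', hc, hcond⟩ := (mem_bagT_branch hxlt).mp hx
        rw [Option.some.injEq, Prod.mk.injEq] at hc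
        obtain ⟨rfl, rfl⟩ := hc
        obtain ⟨hdiv, hjle⟩ : a.val = x.val / ℓ + 1 ∧ j.val ≤ x.val % ℓ := by
          rcases hcond with h1 | ⟨h2, -⟩
          · exact h1
          · exact absurd h2 ha
        have hroot : x ≠ twroot ℓ := ne_root_iff.mpr hxlt
        -- x ≠ r means x.val % ℓ > j.val
        have hmodne : x.val % ℓ ≠ j.val := by
          intro hcontra
          apply hxr
          apply Fin.ext
          have hx' : x.val = (x.val / ℓ) * ℓ + x.val % ℓ := by
            rw [mul_comm]; exact (Nat.div_add_mod x.val ℓ).symm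
          have ht : x.val / ℓ = a.val - 1 := by omega
          rw [ht] at hx'
          have : (twnode (a.val - 1) j.val hblt j.isLt).val = (a.val - 1) * ℓ + j.val := by
            have h1 := twnode_div (ℓ := ℓ) (a.val - 1) j.val hblt j.isLt
            have h2 := twnode_mod (ℓ := ℓ) (a.val - 1) j.val hblt j.isLt
            have h3 : (twnode (a.val - 1) j.val hblt j.isLt).val =
                ((twnode (a.val - 1) j.val hblt j.isLt).val / ℓ) * ℓ +
                (twnode (a.val - 1) j.val hblt j.isLt).val % ℓ := by
              rw [mul_comm]; exact (Nat.div_add_mod _ ℓ).symm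
            rw [h3, h1, h2]
          rw [this]
          omega
        have h0 : x.val % ℓ ≠ 0 := by omega
        have hpv : (twpar ℓ x).val = x.val - 1 := twpar_of_mod_ne hxlt h0
        have hplt : (twpar ℓ x).val < (ℓ-1)*ℓ := by omega
        obtain ⟨hm, hd⟩ := mod_div_pred hℓ0 h0
        refine ⟨twpar ℓ x, ?_, adj_parent hdec_tw hroot, hdec_tw x hroot⟩
        refine (mem_bagT_branch hplt).mpr ⟨a, j, rfl, Or.inl ⟨?_, ?_⟩⟩
        · rw [hpv, hd]; omega
        · rw [hpv, hm]; omega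



lemma tw_upper {ℓ : ℕ} (hℓ : 3 ≤ ℓ) : HasTreeDecompOfWidth (Gll ℓ) ℓ := by
  have hℓ0 : 0 < ℓ := by omega
  exact ⟨twm ℓ, parentGraph (twpar ℓ), bagT ℓ hℓ0,
    parentGraph_isTree hdec_tw hr_tw, vert_cover hℓ0,
    fun u v h => edge_cover hℓ0 h, bag_conn hℓ0, card_bagT hℓ0⟩

lemma tw_lower {ℓ : ℕ} (hℓ : 3 ≤ ℓ) (w : ℕ) (h : HasTreeDecompOfWidth (Gll ℓ) w) :
    ℓ ≤ w := by
  classical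
  have hℓ0 : 0 < ℓ := by omega
  obtain ⟨m, T, bags, hT, hcov, hedge, hconn, hcard⟩ := h
  set c0 : Fin ℓ := ⟨0, hℓ0⟩ with hc0
  set K : Finset (Option (Fin ℓ × Fin ℓ)) :=
    insert none (Finset.univ.image fun j : Fin ℓ => some (c0, j)) with hK
  have hKadj : ∀ u ∈ K, ∀ v ∈ K, u ≠ v → (Gll ℓ).Adj u v := by
    intro u hu v hv huv
    rw [Gll, SimpleGraph.fromRel_adj]
    refine ⟨huv, ?_⟩
    simp only [hK, Finset.mem_insert, Finset.mem_image, Finset.mem_univ, true_and] at hu hv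
    rcases hu with rfl | ⟨j, rfl⟩
    · rcases hv with rfl | ⟨k, rfl⟩
      · exact absurd rfl huv
      · exact Or.inl rfl
    · rcases hv with rfl | ⟨k, rfl⟩
      · exact Or.inr rfl
      · refine Or.inl (Or.inl ⟨rfl, ?_⟩)
        intro hjk
        have hjk' : j = k := hjk
        exact huv (by rw [hjk'])
  obtain ⟨t, ht⟩ := helly T hT K (fun v => {i | v ∈ bags i})
    (fun v _ => hconn v)
    (by
      intro u hu v hv
      by_cases huv : u = v
      · subst huv; obtain ⟨i, hi⟩ := hcov u; exact ⟨i, hi, hi⟩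
      · obtain ⟨i, h1, h2⟩ := hedge u v (hKadj u hu v hv huv); exact ⟨i, h1, h2⟩)
  have hsub : K ⊆ bags t := fun v hv => ht v hv
  have hcardK : K.card = ℓ + 1 := by
    rw [hK, Finset.card_insert_of_notMem (by simp),
      Finset.card_image_of_injective _ (fun a b hab => by simpa using hab),
      Finset.card_univ, Fintype.card_fin]
  have h1 := Finset.card_le_card hsub
  have h2 := hcard t
  omega

end TWProof

/-- For every `ℓ ≥ 3`, the graph `G_{ℓ,ℓ−1}` has treewidth exactly `ℓ`. -/
theorem stmt8 (ℓ : ℕ) (hℓ : 3 ≤ ℓ) : treewidth (Gll ℓ) = ℓ := by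
  have hup := TWProof.tw_upper hℓ
  unfold treewidth
  exact le_antisymm (Nat.sInf_le hup)
    (le_csInf ⟨ℓ, hup⟩ fun w hw => TWProof.tw_lower hℓ w hw)
end

section
/- For every integer ℓ ≥ 3, the pathwidth of the graph G_{ℓ,ℓ−1} is at most 2ℓ − 1. -/
open Finset SimpleGraph

variable {V : Type*}

def myBags (ℓ : ℕ) [NeZero ℓ] (i : Fin ℓ) : Finset (Option (Fin ℓ × Fin ℓ)) :=
  (if i = 0 then {none} else Finset.univ.image (fun j : Fin ℓ => some (i, j))) ∪
    Finset.univ.image (fun j : Fin ℓ => (some ((0 : Fin ℓ), j) : Option (Fin ℓ × Fin ℓ)))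

lemma mem_myBags_none (ℓ : ℕ) [NeZero ℓ] (i : Fin ℓ) :
    (none ∈ myBags ℓ i) ↔ i = 0 := by
  unfold myBags
  rw [Finset.mem_union]
  split <;> simp_all

lemma mem_myBags_some (ℓ : ℕ) [NeZero ℓ] (i : Fin ℓ) (p : Fin ℓ × Fin ℓ) :
    (some p ∈ myBags ℓ i) ↔ p.1 = 0 ∨ p.1 = i := by
  unfold myBags
  rw [Finset.mem_union, Finset.mem_image]
  by_cases h0 : i = 0
  · subst h0
    simp [Prod.ext_iff, eq_comm]
    
  · rw [if_neg h0, Finset.mem_image]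
    simp [Prod.ext_iff, eq_comm]
    tauto

lemma card_myBags (ℓ : ℕ) [NeZero ℓ] (i : Fin ℓ) : (myBags ℓ i).card ≤ 2 * ℓ := by
  refine le_trans (Finset.card_union_le _ _) ?_
  have h1 : (if i = 0 then ({none} : Finset (Option (Fin ℓ × Fin ℓ))) else Finset.univ.image (fun j : Fin ℓ => some (i, j))).card ≤ ℓ := by
    split
    · have : 1 ≤ ℓ := Nat.one_le_iff_ne_zero.mpr (NeZero.ne ℓ)
      simpa using this
    · exact le_trans Finset.card_image_le (by simp)
  have h2 : (Finset.univ.image (fun j : Fin ℓ => (some ((0 : Fin ℓ), j) : Option (Fin ℓ × Fin ℓ)))).card ≤ ℓ :=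
    le_trans Finset.card_image_le (by simp)
  omega

/-- For every `ℓ ≥ 3`, the pathwidth of `G_{ℓ,ℓ−1}` is at most `2ℓ − 1`. -/
theorem stmt9 (ℓ : ℕ) (hℓ : 3 ≤ ℓ) : pathwidth (Gll ℓ) ≤ 2 * ℓ - 1 := by
  haveI : NeZero ℓ := ⟨by omega⟩
  apply Nat.sInf_le
  show HasPathDecompOfWidth _ _
  haveI : NeZero ℓ := ⟨by omega⟩
  refine ⟨ℓ, myBags ℓ, ?_, ?_, ?_, ?_⟩
  · rintro (_ | p)
    · exact ⟨0, (mem_myBags_none ℓ 0).mpr rfl⟩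
    · exact ⟨p.1, (mem_myBags_some ℓ p.1 p).mpr (Or.inr rfl)⟩
  · rintro (_ | p) (_ | q) huv
    · simp [Gll] at huv
    · refine ⟨0, (mem_myBags_none ℓ 0).mpr rfl, (mem_myBags_some ℓ 0 q).mpr (Or.inl ?_)⟩
      rw [Gll, SimpleGraph.fromRel_adj] at huv
      rcases huv.2 with h | h
      · exact Fin.ext (by simpa using h)
      · exact absurd h (by simp)
    · refine ⟨0, (mem_myBags_some ℓ 0 p).mpr (Or.inl ?_), (mem_myBags_none ℓ 0).mpr rfl⟩
      rw [Gll, SimpleGraph.fromRel_adj] at huv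
      rcases huv.2 with h | h
      · exact absurd h (by simp)
      · exact Fin.ext (by simpa using h)
    · rw [Gll, SimpleGraph.fromRel_adj] at huv
      rcases huv.2 with (⟨h1, _⟩ | ⟨_, h2⟩) | (⟨h1, _⟩ | ⟨_, h2⟩)
      · exact ⟨p.1, (mem_myBags_some ℓ p.1 p).mpr (Or.inr rfl),
          (mem_myBags_some ℓ p.1 q).mpr (Or.inr h1.symm)⟩
      · exact ⟨p.1, (mem_myBags_some ℓ p.1 p).mpr (Or.inr rfl),
          (mem_myBags_some ℓ p.1 q).mpr (Or.inl (Fin.ext (by simpa using h2)))⟩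
      · exact ⟨p.1, (mem_myBags_some ℓ p.1 p).mpr (Or.inr rfl),
          (mem_myBags_some ℓ p.1 q).mpr (Or.inr h1)⟩
      · exact ⟨q.1, (mem_myBags_some ℓ q.1 p).mpr (Or.inl (Fin.ext (by simpa using h2))),
          (mem_myBags_some ℓ q.1 q).mpr (Or.inr rfl)⟩
  · rintro (_ | p) i j k hij hjk hi hk
    · rw [mem_myBags_none] at hi hk ⊢
      subst hi
      exact le_antisymm (hk ▸ hjk) hij
    · rw [mem_myBags_some] at hi hk ⊢
      rcases hi with h | h
      · exact Or.inl h
      · rcases hk with h' | h'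
        · exact Or.inl h'
        · right
          have hik : i = k := h.symm.trans h'
          have hji : j = i := le_antisymm (hik ▸ hjk) hij
          exact h.trans hji.symm
  · intro i
    have := card_myBags ℓ i
    omega
end

section
/- Let G be a finite simple graph and let k be an integer with k > Γ(G). If the k-reconfiguration graph R_k(G) is connected, then R_{k+1}(G) is connected. -/
open Finset SimpleGraph

variable {V : Type*}

lemma isDomSet_superset {G : SimpleGraph V} {D D' : Finset V} (h : IsDomSet G D')
    (hs : D' ⊆ D) : IsDomSet G D := fun v =>
  (h v).imp (fun hv => hs hv) (fun ⟨u, hu, ha⟩ => ⟨u, hs hu, ha⟩)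

lemma minimal_card_le_gammaU_s11 [Fintype V] {G : SimpleGraph V} {D : Finset V}
    (h : Minimal (IsDomSet G) D) : D.card ≤ gammaU G := by
  apply le_csSup
  · exact ⟨Fintype.card V, fun n ⟨D, _, hD⟩ => hD ▸ D.card_le_univ⟩
  · exact ⟨D, h, rfl⟩

/-- Drop a vertex from a too-large dominating set. -/
lemma exists_erase_domSet [Fintype V] [DecidableEq V] {G : SimpleGraph V} {D : Finset V}
    (hD : IsDomSet G D) (hcard : gammaU G < D.card) :
    ∃ v ∈ D, IsDomSet G (D.erase v) := by
  have hnm : ¬ Minimal (IsDomSet G) D := fun hm =>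
    absurd (minimal_card_le_gammaU_s11 hm) (not_le.mpr hcard)
  rw [Minimal] at hnm
  push_neg at hnm
  obtain ⟨D', hD', hsub, hns⟩ := hnm hD
  obtain ⟨v, hvD, hvD'⟩ : ∃ v ∈ D, v ∉ D' := by
    by_contra hc; push_neg at hc; exact hns hc
  refine ⟨v, hvD, isDomSet_superset hD' fun x hx => ?_⟩
  exact Finset.mem_erase.mpr ⟨fun he => hvD' (he ▸ hx), hsub hx⟩

/-- If `k > Γ(G)` and `R_k(G)` is connected, then `R_{k+1}(G)` is connected. -/
theorem stmt11 {V : Type} [Fintype V] [DecidableEq V] (G : SimpleGraph V) (k : ℕ)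
    (hk : gammaU G < k) (h : (reconfGraph G k).Connected) :
    (reconfGraph G (k + 1)).Connected := by
  let F : reconfGraph G k →g reconfGraph G (k + 1) :=
    ⟨fun A => ⟨A.1, A.2.1, A.2.2.trans (Nat.le_succ k)⟩, fun {A B} ha => ha⟩
  -- every vertex of R_{k+1} is reachable from the image of some vertex of R_k
  have key : ∀ B : {D : Finset V // IsDomSet G D ∧ D.card ≤ k + 1},
      ∃ A : {D : Finset V // IsDomSet G D ∧ D.card ≤ k},
        (reconfGraph G (k + 1)).Reachable (F A) B := by
    intro B
    by_cases hB : B.1.card ≤ k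
    · exact ⟨⟨B.1, B.2.1, hB⟩, by exact SimpleGraph.Reachable.refl _⟩
    · have hcard : gammaU G < B.1.card := hk.trans (not_le.mp hB)
      obtain ⟨v, hv, hdom⟩ := exists_erase_domSet B.2.1 hcard
      have hle : (B.1.erase v).card ≤ k := by
        have := Finset.card_erase_of_mem hv
        omega
      refine ⟨⟨B.1.erase v, hdom, hle⟩, SimpleGraph.Adj.reachable ?_⟩
      show (symmDiff (B.1.erase v) B.1).card = 1
      have : symmDiff (B.1.erase v) B.1 = {v} := by
        rw [symmDiff_def]
        ext x
        simp only [Finset.sup_eq_union, Finset.mem_union, Finset.mem_sdiff,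
          Finset.mem_erase, Finset.mem_singleton]
        constructor
        · rintro (⟨⟨_, hx⟩, hnx⟩ | ⟨hx, hnx⟩)
          · exact absurd hx hnx
          · by_contra hne; exact hnx ⟨hne, hx⟩
        · rintro rfl; exact Or.inr ⟨hv, fun h => h.1 rfl⟩
      rw [this, Finset.card_singleton]
  obtain ⟨A⟩ := h.nonempty
  have hne : Nonempty {D : Finset V // IsDomSet G D ∧ D.card ≤ k + 1} := ⟨F A⟩
  refine SimpleGraph.Connected.mk ?_
  intro B₁ B₂
  obtain ⟨A₁, h₁⟩ := key B₁
  obtain ⟨A₂, h₂⟩ := key B₂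
  exact h₁.symm.trans (((h.preconnected A₁ A₂).map F).trans h₂)
end

section
/- For every n ≥ 3, in the star K_{1,n} the set of all n leaves is a dominating set of size n that is an isolated vertex of the n-reconfiguration graph R_n(K_{1,n}); in particular, R_n(K_{1,n}) is not connected. -/
open Finset SimpleGraph

variable {V : Type*}

lemma starGraph_adj (n : ℕ) (u v : Option (Fin n)) :
    (_root_.starGraph n).Adj u v ↔ u ≠ v ∧ (u = none ∨ v = none) := by
  simp [_root_.starGraph, SimpleGraph.fromRel_adj]

lemma firstStep {α : Type*} {G : SimpleGraph α} {a b : α} (hab : a ≠ b) (p : G.Walk a b) :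
    ∃ c, G.Adj a c := by
  cases p with
  | nil => exact absurd rfl hab
  | cons h _ => exact ⟨_, h⟩

/-- For `n ≥ 3`, in the star `K_{1,n}` the set of all `n` leaves is a dominating set of size
`n` that is an isolated vertex of `R_n(K_{1,n})`; in particular `R_n(K_{1,n})` is not
connected. -/
theorem stmt13 (n : ℕ) (hn : 3 ≤ n) :
    IsDomSet (_root_.starGraph n) (Finset.univ.erase none) ∧
    (Finset.univ.erase (none : Option (Fin n))).card = n ∧
    (∀ A B : {D : Finset (Option (Fin n)) // IsDomSet (_root_.starGraph n) D ∧ D.card ≤ n},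
      A.val = Finset.univ.erase none → ¬ (reconfGraph (_root_.starGraph n) n).Adj A B) ∧
    ¬ (reconfGraph (_root_.starGraph n) n).Connected := by
  classical
  have hdom : IsDomSet (_root_.starGraph n) (Finset.univ.erase none) := by
    intro v
    match v with
    | some i => exact Or.inl (by simp)
    | none =>
      refine Or.inr ⟨some ⟨0, by omega⟩, by simp, ?_⟩
      rw [_root_.starGraph_adj]; simp
  have hcard : (Finset.univ.erase (none : Option (Fin n))).card = n := by
    simp [Finset.card_erase_of_mem, Fintype.card_option]
  have hiso : ∀ A B : {D : Finset (Option (Fin n)) // IsDomSet (_root_.starGraph n) D ∧ D.card ≤ n},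
      A.val = Finset.univ.erase none → ¬ (reconfGraph (_root_.starGraph n) n).Adj A B := by
    intro A B hA hadj
    obtain ⟨x, hx⟩ := Finset.card_eq_one.mp hadj
    have hmem : ∀ y, y ∈ symmDiff A.val B.val ↔ y = x := by
      rw [hx]; intro y; simp
    cases x with
    | none =>
      have h0 : none ∈ B.val := by
        have := (hmem none).mpr rfl
        rw [Finset.mem_symmDiff] at this
        rcases this with ⟨h1, _⟩ | ⟨h1, _⟩
        · rw [hA] at h1; simp at h1
        · exact h1
      have hall : ∀ i : Fin n, some i ∈ B.val := by
        intro i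
        have hni : some i ∉ symmDiff A.val B.val := by
          rw [hmem]; simp
        rw [Finset.mem_symmDiff] at hni
        push_neg at hni
        exact hni.1 (by rw [hA]; simp)
      have huniv : B.val = Finset.univ := by
        apply Finset.eq_univ_of_forall
        intro y
        match y with
        | none => exact h0
        | some i => exact hall i
      have := B.prop.2
      rw [huniv] at this
      simp [Fintype.card_option] at this
    | some i =>
      have h0 : none ∉ B.val := by
        have hni : none ∉ symmDiff A.val B.val := by rw [hmem]; simp
        rw [Finset.mem_symmDiff] at hni
        push_neg at hni
        intro hb
        have := hni.2 hb
        rw [hA] at this; simp at this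
      have hi : some i ∉ B.val := by
        have := (hmem (some i)).mpr rfl
        rw [Finset.mem_symmDiff] at this
        rcases this with ⟨_, h2⟩ | ⟨_, h2⟩
        · exact h2
        · exact absurd (by rw [hA]; simp) h2
      rcases B.prop.1 (some i) with h | ⟨u, hu, hadj'⟩
      · exact hi h
      · rw [_root_.starGraph_adj] at hadj'
        rcases hadj'.2 with h | h
        · rw [h] at hu; exact h0 hu
        · simp at h
  refine ⟨hdom, hcard, hiso, ?_⟩
  intro hconn
  have hdom1 : IsDomSet (_root_.starGraph n) ({none} : Finset (Option (Fin n))) := by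
    intro v
    match v with
    | none => exact Or.inl (by simp)
    | some i =>
      refine Or.inr ⟨none, by simp, ?_⟩
      rw [_root_.starGraph_adj]; simp
  set A : {D : Finset (Option (Fin n)) // IsDomSet (_root_.starGraph n) D ∧ D.card ≤ n} :=
    ⟨Finset.univ.erase none, hdom, hcard.le⟩ with hAdef
  set B : {D : Finset (Option (Fin n)) // IsDomSet (_root_.starGraph n) D ∧ D.card ≤ n} :=
    ⟨{none}, hdom1, by simp; omega⟩ with hBdef
  have hAB : A ≠ B := by
    intro h
    have : (Finset.univ.erase (none : Option (Fin n))) = {none} := congrArg Subtype.val h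
    have h0 : (none : Option (Fin n)) ∈ Finset.univ.erase (none : Option (Fin n)) := by
      rw [this]; simp
    simp at h0
  obtain ⟨c, hc⟩ := firstStep hAB (hconn.preconnected A B).some
  exact hiso A c rfl hc
end

section
/- For every n ≥ 3 and every integer k with 1 ≤ k ≤ n − 1, the k-reconfiguration graph R_k(K_{1,n}) is connected. -/
open Finset SimpleGraph

variable {V : Type*}

/-- For every `n ≥ 3` and `1 ≤ k ≤ n − 1`, the graph `R_k(K_{1,n})` is connected. -/
theorem stmt14 (n k : ℕ) (hn : 3 ≤ n) (hk1 : 1 ≤ k) (hk2 : k ≤ n - 1) :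
    (reconfGraph (_root_.starGraph n) k).Connected := by
  classical
  -- every dominating set of size ≤ k contains the center `none`
  have hcen : ∀ D : Finset (Option (Fin n)), IsDomSet (_root_.starGraph n) D → D.card ≤ k →
      (none : Option (Fin n)) ∈ D := by
    intro D hD hcard
    by_contra hne
    have hall : ∀ i : Fin n, (some i : Option (Fin n)) ∈ D := by
      intro i
      rcases hD (some i) with h | ⟨u, hu, hadj⟩
      · exact h
      · have hu0 : u = none := by
          simp only [_root_.starGraph, SimpleGraph.fromRel_adj] at hadj
          tauto
        exact absurd (hu0 ▸ hu) hne
    have hsub : (Finset.univ.image (fun i : Fin n => (some i : Option (Fin n)))) ⊆ D := by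
      intro x hx
      simp only [Finset.mem_image, Finset.mem_univ, true_and] at hx
      obtain ⟨i, rfl⟩ := hx
      exact hall i
    have hle : n ≤ D.card := by
      have := Finset.card_le_card hsub
      rwa [Finset.card_image_of_injective _ (Option.some_injective _), Finset.card_univ,
        Fintype.card_fin] at this
    omega
  have hrootdom : IsDomSet (_root_.starGraph n) ({none} : Finset (Option (Fin n))) := by
    intro v
    cases v with
    | none => exact Or.inl (Finset.mem_singleton_self _)
    | some i =>
      refine Or.inr ⟨none, Finset.mem_singleton_self _, ?_⟩
      simp [_root_.starGraph, SimpleGraph.fromRel_adj]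
  have hrootcard : ({none} : Finset (Option (Fin n))).card ≤ k := by
    simp [hk1]
  set root : {D : Finset (Option (Fin n)) // IsDomSet (_root_.starGraph n) D ∧ D.card ≤ k} :=
    ⟨{none}, hrootdom, hrootcard⟩ with hroot
  have key : ∀ m : ℕ, ∀ A : {D : Finset (Option (Fin n)) // IsDomSet (_root_.starGraph n) D ∧ D.card ≤ k},
      A.val.card ≤ m → (reconfGraph (_root_.starGraph n) k).Reachable A root := by
    intro m
    induction m with
    | zero =>
      intro A hA
      exfalso
      have := hcen A.val A.2.1 A.2.2
      have := Finset.card_pos.mpr ⟨_, this⟩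
      omega
    | succ m ih =>
      intro A hA
      have hnone : (none : Option (Fin n)) ∈ A.val := hcen A.val A.2.1 A.2.2
      by_cases hA1 : A.val = {none}
      · have : A = root := Subtype.ext hA1
        rw [this]
      · have hx : ∃ x ∈ A.val, x ≠ (none : Option (Fin n)) := by
          by_contra h
          push_neg at h
          exact hA1 (Finset.eq_singleton_iff_unique_mem.mpr ⟨hnone, h⟩)
        obtain ⟨x, hx, hxne⟩ := hx
        set A' : Finset (Option (Fin n)) := A.val.erase x with hA'
        have hnone' : (none : Option (Fin n)) ∈ A' := Finset.mem_erase.mpr ⟨fun h => hxne h.symm, hnone⟩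
        have hdom' : IsDomSet (_root_.starGraph n) A' := by
          intro v
          cases v with
          | none => exact Or.inl hnone'
          | some i =>
            refine Or.inr ⟨none, hnone', ?_⟩
            simp [_root_.starGraph, SimpleGraph.fromRel_adj]
        have hcard' : A'.card ≤ k := le_trans (Finset.card_le_card (Finset.erase_subset _ _)) A.2.2
        have hcardeq : A'.card = A.val.card - 1 := Finset.card_erase_of_mem hx
        have hAc : 1 ≤ A.val.card := Finset.card_pos.mpr ⟨_, hnone⟩
        have hadj : (reconfGraph (_root_.starGraph n) k).Adj A ⟨A', hdom', hcard'⟩ := by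
          show (symmDiff A.val A').card = 1
          have : symmDiff A.val A' = {x} := by
            ext y
            simp only [Finset.mem_symmDiff, hA', Finset.mem_erase, Finset.mem_singleton]
            constructor
            · rintro (⟨hy, hy2⟩ | ⟨⟨hy1, hy2⟩, hy3⟩)
              · by_contra hne
                exact hy2 ⟨hne, hy⟩
              · exact absurd hy2 hy3
            · rintro rfl
              exact Or.inl ⟨hx, fun h => h.1 rfl⟩
          rw [this, Finset.card_singleton]
        exact (hadj.reachable).trans (ih ⟨A', hdom', hcard'⟩ (by show A'.card ≤ m; omega))
  haveI : Nonempty {D : Finset (Option (Fin n)) // IsDomSet (_root_.starGraph n) D ∧ D.card ≤ k} := ⟨root⟩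
  exact ⟨fun A B => (key A.val.card A le_rfl).trans (key B.val.card B le_rfl).symm⟩
end
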